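/- arXiv:math-ph/0702081 — 5 statements merged into one kernel-verified Lean document; each statement's English description precedes it below -/
import Mathlib

section
/- Let g : ℝ → ℝ be a real trigonometric polynomial of degree at most M (i.e., g(t) = a_0 + Σ_{m=1}^{M} (a_m cos 2πmt + b_m sin 2πmt)), not identically zero, and let ε > 0. Then (1/(2ε)) · ∫_{{t ∈ [0,1] : |g(t)| ≤ ε}} |g'(t)| dt ≤ 6M. -/
/-!
Between consecutive zeros of `g'` the function `g` is injective, so by the change of variables
formula the integral of `|g'|` over such a piece of `{|g| ≤ ε}` is the length of its image under
`g`, which lies in `[-ε, ε]`. With `z = exp (2πit)`, `z ^ M * g' t` is a polynomial of degree at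
most `2M` in `z`, so unless `g' ≡ 0` (which is automatic when `M = 0`) it has at most `2M` zeros in
a period. The `2M + 1` pieces give the bound `(2M + 1) * 2ε ≤ 6M * 2ε`.
-/

open Real MeasureTheory Set Polynomial

lemma setIntegral_union_le_of_nonneg {α : Type*} [MeasurableSpace α] {μ : Measure α}
    {f : α → ℝ} (hf : 0 ≤ f) (s t : Set α) :
    ∫ x in s ∪ t, f x ∂μ ≤ ∫ x in s, f x ∂μ + ∫ x in t, f x ∂μ := by
  by_cases hint : IntegrableOn f (s ∪ t) μ
  · rw [← integral_add_measure hint.left_of_union hint.right_of_union]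
    exact integral_mono_measure (Measure.restrict_union_le s t) (Filter.Eventually.of_forall hf)
      (Integrable.add_measure hint.left_of_union hint.right_of_union)
  · rw [integral_undef hint]
    exact add_nonneg (integral_nonneg hf) (integral_nonneg hf)

lemma injOn_Icc_of_hasDerivAt_ne_zero {f f' : ℝ → ℝ} {u v : ℝ}
    (hf : ∀ t ∈ Icc u v, HasDerivAt f (f' t) t) (hf' : ∀ t ∈ Ioo u v, f' t ≠ 0) :
    InjOn f (Icc u v) := by
  have hcont : ContinuousOn f (Icc u v) := fun t ht => (hf t ht).continuousAt.continuousWithinAt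
  have hderiv : ∀ t ∈ interior (Icc u v), HasDerivWithinAt f (f' t) (interior (Icc u v)) t := by
    rw [interior_Icc]
    exact fun t ht => (hf t (Ioo_subset_Icc_self ht)).hasDerivWithinAt
  rcases hasDerivWithinAt_forall_lt_or_forall_gt_of_forall_ne (convex_Ioo u v)
    (fun t ht => (hf t (Ioo_subset_Icc_self ht)).hasDerivWithinAt) hf' with hneg | hpos
  · exact (strictAntiOn_of_hasDerivWithinAt_neg (convex_Icc u v) hcont hderiv
      (by rwa [interior_Icc])).injOn
  · exact (strictMonoOn_of_hasDerivWithinAt_pos (convex_Icc u v) hcont hderiv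
      (by rwa [interior_Icc])).injOn

lemma integral_abs_deriv_sublevel_inter_Icc_le_of_deriv_ne_zero {f f' : ℝ → ℝ} {u v ε : ℝ}
    (hε : 0 ≤ ε) (hf : ∀ t ∈ Icc u v, HasDerivAt f (f' t) t) (hf' : ∀ t ∈ Ioo u v, f' t ≠ 0) :
    ∫ t in {t | |f t| ≤ ε} ∩ Icc u v, |f' t| ≤ 2 * ε := by
  set S := {t | |f t| ≤ ε} ∩ Icc u v
  have hS : MeasurableSet S := by
    have hcont : ContinuousOn (fun t => |f t|) (Icc u v) :=
      fun t ht => (hf t ht).continuousAt.continuousWithinAt.abs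
    rw [show S = Icc u v ∩ (fun t => |f t|) ⁻¹' Iic ε from inter_comm _ _]
    exact (hcont.preimage_isClosed_of_isClosed isClosed_Icc isClosed_Iic).measurableSet
  have hmaps : f '' S ⊆ Icc (-ε) ε := by
    rintro _ ⟨t, ht, rfl⟩
    exact abs_le.1 ht.1
  calc ∫ t in S, |f' t| = ∫ y in f '' S, (1 : ℝ) := by
        rw [integral_image_eq_integral_abs_deriv_smul hS
          (fun t ht => (hf t ht.2).hasDerivWithinAt)
          ((injOn_Icc_of_hasDerivAt_ne_zero hf hf').mono inter_subset_right)]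
        simp
    _ = volume.real (f '' S) := by simp
    _ ≤ volume.real (Icc (-ε) ε) := measureReal_mono hmaps measure_Icc_lt_top.ne
    _ = 2 * ε := by rw [Real.volume_real_Icc_of_le (by linarith)]; ring

open Finset in
lemma integral_abs_deriv_sublevel_inter_Icc_le_of_zeros_subset {f f' : ℝ → ℝ} {ε : ℝ}
    (hε : 0 ≤ ε) (Z : Finset ℝ) {u v : ℝ} (hf : ∀ t ∈ Icc u v, HasDerivAt f (f' t) t)
    (hZ : ∀ t ∈ Ioo u v, f' t = 0 → t ∈ Z) :
    ∫ t in {t | |f t| ≤ ε} ∩ Icc u v, |f' t| ≤ (#Z + 1) * (2 * ε) := by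
  classical
  induction Z using Finset.induction_on_max generalizing u v with
  | empty =>
    simpa using integral_abs_deriv_sublevel_inter_Icc_le_of_deriv_ne_zero hε hf
      fun t ht h0 => notMem_empty t (hZ t ht h0)
  | insert a s has ih =>
    rw [card_insert_of_notMem fun ha => (has a ha).false, Nat.cast_succ]
    by_cases ha : a ∈ Ioo u v
    · have hleft := ih (fun t ht => hf t (Icc_subset_Icc_right ha.2.le ht)) fun t ht h0 =>
        (mem_insert.1 (hZ t ⟨ht.1, ht.2.trans ha.2⟩ h0)).resolve_left ht.2.ne
      have hright := integral_abs_deriv_sublevel_inter_Icc_le_of_deriv_ne_zero hε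
        (fun t ht => hf t (Icc_subset_Icc_left ha.1.le ht)) fun t ht h0 =>
        (mem_insert.1 (hZ t ⟨ha.1.trans ht.1, ht.2⟩ h0)).elim (fun h => ht.1.ne' h)
          fun h => (has t h).not_gt ht.1
      calc ∫ t in {t | |f t| ≤ ε} ∩ Icc u v, |f' t|
          = ∫ t in {t | |f t| ≤ ε} ∩ Icc u a ∪ {t | |f t| ≤ ε} ∩ Icc a v, |f' t| := by
            rw [← inter_union_distrib_left, Icc_union_Icc_eq_Icc ha.1.le ha.2.le]
        _ ≤ _ := setIntegral_union_le_of_nonneg (fun t => abs_nonneg _) _ _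
        _ ≤ (#s + 1) * (2 * ε) + 2 * ε := add_le_add hleft hright
        _ = (#s + 1 + 1) * (2 * ε) := by ring
    · calc ∫ t in {t | |f t| ≤ ε} ∩ Icc u v, |f' t|
          ≤ (#s + 1) * (2 * ε) := ih hf fun t ht h0 =>
            (mem_insert.1 (hZ t ht h0)).resolve_left fun h => ha (h ▸ ht)
        _ ≤ (#s + 1 + 1) * (2 * ε) := by nlinarith

noncomputable def trigPoly (N : ℕ) (a b : ℕ → ℝ) (t : ℝ) : ℝ :=
  a 0 + ∑ m ∈ Finset.Icc 1 N, (a m * cos (2 * π * m * t) + b m * sin (2 * π * m * t))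

lemma hasDerivAt_trigPoly (N : ℕ) (a b : ℕ → ℝ) (t : ℝ) :
    HasDerivAt (trigPoly N a b)
      (trigPoly N (fun m => 2 * π * m * b m) (fun m => -(2 * π * m * a m)) t) t := by
  have hterm : ∀ m : ℕ, HasDerivAt
      (fun t => a m * cos (2 * π * m * t) + b m * sin (2 * π * m * t))
      (2 * π * m * b m * cos (2 * π * m * t) + -(2 * π * m * a m) * sin (2 * π * m * t)) t := by
    intro m
    have hlin : HasDerivAt (fun t : ℝ => 2 * π * m * t) (2 * π * m) t := by
      simpa using (hasDerivAt_id t).const_mul (2 * π * m)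
    exact ((hlin.cos.const_mul (a m)).fun_add (hlin.sin.const_mul (b m))).congr_deriv (by ring)
  unfold trigPoly
  simpa using (HasDerivAt.fun_sum fun m _ => hterm m).const_add (a 0)

noncomputable def trigPoly.polynomial (N : ℕ) (a b : ℕ → ℝ) : ℂ[X] :=
  C (a 0 : ℂ) * X ^ N + ∑ m ∈ Finset.Icc 1 N,
    (C ((a m - b m * Complex.I) / 2) * X ^ (N + m) + C ((a m + b m * Complex.I) / 2) * X ^ (N - m))

lemma trigPoly.natDegree_polynomial_le (N : ℕ) (a b : ℕ → ℝ) :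
    (trigPoly.polynomial N a b).natDegree ≤ 2 * N := by
  unfold trigPoly.polynomial
  refine natDegree_add_le_of_degree_le ((natDegree_C_mul_X_pow_le _ _).trans (by omega))
    (natDegree_sum_le_of_forall_le _ _ fun m hm => ?_)
  have hmN := (Finset.mem_Icc.1 hm).2
  exact natDegree_add_le_of_degree_le ((natDegree_C_mul_X_pow_le _ _).trans (by omega))
    ((natDegree_C_mul_X_pow_le _ _).trans (by omega))

lemma ofReal_mul_cos_add_mul_sin (α β θ : ℝ) :
    ((α * cos θ + β * sin θ : ℝ) : ℂ) = (α - β * Complex.I) / 2 * Complex.exp (θ * Complex.I)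
      + (α + β * Complex.I) / 2 * (Complex.exp (θ * Complex.I))⁻¹ := by
  rw [← Complex.exp_neg, ← neg_mul, Complex.exp_mul_I, Complex.exp_mul_I]
  simp only [Complex.cos_neg, Complex.sin_neg]
  push_cast
  linear_combination (β * Complex.sin θ) * Complex.I_sq

lemma trigPoly.eval_polynomial_exp (N : ℕ) (a b : ℕ → ℝ) (t : ℝ) :
    (trigPoly.polynomial N a b).eval (Complex.exp (↑(2 * π * t) * Complex.I)) =
      Complex.exp (↑(2 * π * t) * Complex.I) ^ N * trigPoly N a b t := by
  set z := Complex.exp (↑(2 * π * t) * Complex.I)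
  have hpow : ∀ m : ℕ, z ^ m = Complex.exp (↑(2 * π * m * t) * Complex.I) := fun m => by
    rw [← Complex.exp_nat_mul]; push_cast; ring_nf
  unfold trigPoly.polynomial trigPoly
  simp only [eval_add, eval_mul, eval_C, eval_pow, eval_X, eval_finsetSum]
  rw [Complex.ofReal_add, Complex.ofReal_sum, mul_add, Finset.mul_sum]
  congr 1
  · ring
  refine Finset.sum_congr rfl fun m hm => ?_
  rw [ofReal_mul_cos_add_mul_sin, ← hpow m, pow_add,
    pow_sub₀ z (Complex.exp_ne_zero _) (Finset.mem_Icc.1 hm).2]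
  ring

lemma injOn_exp_two_pi_mul_I_Ico :
    InjOn (fun t : ℝ => Complex.exp (↑(2 * π * t) * Complex.I)) (Ico 0 1) := by
  intro s hs t ht hst
  have hmem : ∀ x ∈ Ico (0 : ℝ) 1, 2 * π * x ∈ Ico 0 (2 * π) := fun x hx =>
    ⟨by nlinarith [hx.1, pi_pos], by nlinarith [hx.2, pi_pos]⟩
  have h : 2 * π * s = 2 * π * t := Circle.exp_injOn_Ico (by simp) (hmem s hs) (hmem t ht)
    (Circle.ext (by simpa only [Circle.coe_exp] using hst))
  nlinarith [pi_pos]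

lemma encard_setOf_trigPoly_eq_zero_le {N : ℕ} {a b : ℕ → ℝ} (h : trigPoly N a b ≠ 0) :
    {t ∈ Ico (0 : ℝ) 1 | trigPoly N a b t = 0}.encard ≤ 2 * N := by
  have hQ : trigPoly.polynomial N a b ≠ 0 := by
    contrapose! h
    ext t
    have := trigPoly.eval_polynomial_exp N a b t
    rw [h, eval_zero, eq_comm, mul_eq_zero] at this
    simpa [Complex.exp_ne_zero] using this
  have hmaps : MapsTo (fun t : ℝ => Complex.exp (↑(2 * π * t) * Complex.I))
      {t ∈ Ico (0 : ℝ) 1 | trigPoly N a b t = 0}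
      ((trigPoly.polynomial N a b).roots.toFinset : Set ℂ) := by
    intro t ht
    simp only [Finset.mem_coe, Multiset.mem_toFinset, mem_roots hQ, IsRoot.def,
      trigPoly.eval_polynomial_exp, ht.2, Complex.ofReal_zero, mul_zero]
  calc {t ∈ Ico (0 : ℝ) 1 | trigPoly N a b t = 0}.encard
      ≤ ((trigPoly.polynomial N a b).roots.toFinset : Set ℂ).encard :=
        encard_le_encard_of_injOn hmaps (injOn_exp_two_pi_mul_I_Ico.mono fun t ht => ht.1)
    _ = (trigPoly.polynomial N a b).roots.toFinset.card := encard_coe_eq_coe_finsetCard _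
    _ ≤ 2 * N := by
        exact_mod_cast (Multiset.toFinset_card_le _).trans
          ((card_roots' _).trans (trigPoly.natDegree_polynomial_le N a b))

theorem stmt4_general (M : ℕ) (a b : ℕ → ℝ) (g : ℝ → ℝ)
    (hg : ∀ t, g t = a 0 + ∑ m ∈ Finset.Icc 1 M,
      (a m * Real.cos (2 * π * m * t) + b m * Real.sin (2 * π * m * t)))
    (ε : ℝ) (hε : 0 < ε) :
    (1 / (2 * ε)) *
      ∫ t in {t : ℝ | |g t| ≤ ε} ∩ Set.Icc (0 : ℝ) 1, |deriv g t| ≤ 6 * M := by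
  obtain rfl : g = trigPoly M a b := funext hg
  set g' := trigPoly M (fun m => 2 * π * m * b m) (fun m => -(2 * π * m * a m))
  have hderiv : ∀ t, HasDerivAt (trigPoly M a b) (g' t) t := hasDerivAt_trigPoly M a b
  rw [funext fun t => (hderiv t).deriv]
  rcases eq_or_ne g' 0 with hzero | hne
  · simp [hzero]
  have hM : 1 ≤ M := Nat.one_le_iff_ne_zero.2 fun hM => hne (by ext; simp [g', trigPoly, hM])
  have hzeros := encard_setOf_trigPoly_eq_zero_le hne
  have hfin := finite_of_encard_le_coe hzeros
  have hbound := integral_abs_deriv_sublevel_inter_Icc_le_of_zeros_subset hε.le hfin.toFinset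
    (fun t _ => hderiv t) fun t ht h0 => hfin.mem_toFinset.2 ⟨Ioo_subset_Ico_self ht, h0⟩
  have hcard : (hfin.toFinset.card : ℝ) ≤ 2 * M := by
    rw [hfin.encard_eq_coe_toFinset_card] at hzeros
    exact_mod_cast hzeros
  calc (1 / (2 * ε)) * ∫ t in {t | |trigPoly M a b t| ≤ ε} ∩ Icc 0 1, |g' t|
      ≤ (1 / (2 * ε)) * ((hfin.toFinset.card + 1) * (2 * ε)) := by gcongr
    _ = hfin.toFinset.card + 1 := by field_simp
    _ ≤ 6 * M := by
        have : (1 : ℝ) ≤ M := by exact_mod_cast hM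
        linarith

/-- Kac's bound: for a nonzero real trigonometric polynomial `g` of degree at most
`M` and `ε > 0`, `(1/(2ε)) ∫_{t ∈ [0,1] : |g(t)| ≤ ε} |g'(t)| dt ≤ 6M`. -/
theorem stmt4 (M : ℕ) (a b : ℕ → ℝ) (g : ℝ → ℝ)
    (hg : ∀ t, g t = a 0 + ∑ m ∈ Finset.Icc 1 M,
      (a m * Real.cos (2 * π * m * t) + b m * Real.sin (2 * π * m * t)))
    (hg0 : g ≠ 0) (ε : ℝ) (hε : 0 < ε) :
    (1 / (2 * ε)) *
      ∫ t in {t : ℝ | |g t| ≤ ε} ∩ Set.Icc (0 : ℝ) 1, |deriv g t| ≤ 6 * M :=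
  stmt4_general M a b g hg ε hε
end

section
/- Let f : 𝕋^d → ℝ be a trigonometric polynomial of the form f(x) = Σ_{λ ∈ Λ} c_λ e^{2πi⟨λ,x⟩} with Λ ⊆ {λ ∈ ℤ^d : |λ|² = E} and real-valued f. Then for every ε > 0, (1/(2ε)) · ∫_{𝕋^d} 1_{|f(x)| ≤ ε} |∇f(x)| dx ≤ 6d√E. -/
open Real MeasureTheory Finset

/-!
On every line parallel to the `i`-th axis, `f` restricts to a real trigonometric polynomial `g`
of degree `N = ⌊√E⌋`, and so is `g'`. With `e(t) = exp(2πit)`, `e(Nt) g'(t)` is a polynomial of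
degree `2N` in `e(t)`, so `g'` has at most `2N` zeros in `[0, 1)` unless it vanishes identically.
Between consecutive zeros `g` is injective, and the substitution `s = g(t)` bounds
`∫ 1_{|g| ≤ ε} |g'|` there by `2ε`; hence `∫₀¹ 1_{|g| ≤ ε} |g'| ≤ 2ε (2N + 1)`.
Fubini and `‖∇f‖ ≤ ∑ᵢ |∂ᵢ f|` then give `∫ 1_{|f| ≤ ε} ‖∇f‖ ≤ 2ε d (2N + 1) ≤ 6ε d √E`.
-/

theorem Int.natAbs_le_sqrt_of_sum_sq_eq {ι : Type*} [Fintype ι] {lam : ι → ℤ} {E : ℕ}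
    (h : ∑ i, lam i ^ 2 = E) (i : ι) : (lam i).natAbs ≤ Nat.sqrt E := by
  rw [Nat.le_sqrt, ← Int.ofNat_le]
  push_cast
  rw [← sq, sq_abs, ← h]
  exact Finset.single_le_sum (f := fun j => lam j ^ 2) (fun j _ => sq_nonneg _) (Finset.mem_univ i)

theorem Finset.card_filter_lt_add_card_filter_gt_lt {α : Type*} [LinearOrder α] {Z : Finset α}
    {t : α} (ht : t ∈ Z) : #(Z.filter (· < t)) + #(Z.filter (t < ·)) < #Z := by
  rw [← card_union_of_disjoint (disjoint_filter.2 fun _ _ h1 h2 => lt_asymm h1 h2)]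
  exact card_lt_card ((ssubset_iff_of_subset
    (union_subset (filter_subset _ _) (filter_subset _ _))).2 ⟨t, ht, by simp⟩)

theorem ContinuousLinearMap.norm_le_sum_norm_apply_single {𝕜 ι F : Type*}
    [NontriviallyNormedField 𝕜] [Fintype ι] [DecidableEq ι] [NormedAddCommGroup F]
    [NormedSpace 𝕜 F] (L : (ι → 𝕜) →L[𝕜] F) : ‖L‖ ≤ ∑ i, ‖L (Pi.single i 1)‖ := by
  refine L.opNorm_le_bound (by positivity) fun v => ?_
  calc ‖L v‖ = ‖∑ i, v i • L (Pi.single i 1)‖ := by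
        conv_lhs => rw [← Finset.univ_sum_single v]
        simp only [map_sum, ← map_smul, ← Pi.single_smul, smul_eq_mul, mul_one]
    _ ≤ ∑ i, ‖v‖ * ‖L (Pi.single i 1)‖ := by
        refine (norm_sum_le _ _).trans (Finset.sum_le_sum fun i _ => ?_)
        rw [norm_smul]
        gcongr
        exact norm_le_pi_norm v i
    _ = (∑ i, ‖L (Pi.single i 1)‖) * ‖v‖ := by rw [Finset.sum_mul]; simp only [mul_comm]

theorem injOn_Icc_of_deriv_ne_zero {g : ℝ → ℝ} (hg : Differentiable ℝ g) {a b : ℝ}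
    (hg' : ∀ t ∈ Set.Ioo a b, deriv g t ≠ 0) : Set.InjOn g (Set.Icc a b) := by
  have key : ∀ x ∈ Set.Icc a b, ∀ y ∈ Set.Icc a b, x < y → g x ≠ g y := by
    intro x hx y hy hxy hgxy
    obtain ⟨t, ht, hzero⟩ := exists_deriv_eq_zero hxy hg.continuous.continuousOn hgxy
    exact hg' t ⟨hx.1.trans_lt ht.1, ht.2.trans_le hy.2⟩ hzero
  intro x hx y hy hgxy
  rcases lt_trichotomy x y with hxy | hxy | hxy
  · exact absurd hgxy (key x hx y hy hxy)
  · exact hxy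
  · exact absurd hgxy.symm (key y hy x hx hxy)

theorem integral_indicator_abs_deriv_le_of_injOn {g g' : ℝ → ℝ} {s : Set ℝ}
    (hs : MeasurableSet s) (hg : ∀ x ∈ s, HasDerivWithinAt g (g' x) s x) (hinj : Set.InjOn g s)
    {ε : ℝ} (hε : 0 ≤ ε) :
    ∫ x in s, {x | |g x| ≤ ε}.indicator (fun x => |g' x|) x ≤ 2 * ε := by
  have hintegrand : ∀ x, {x | |g x| ≤ ε}.indicator (fun x => |g' x|) x
      = |g' x| • (Set.Icc (-ε) ε).indicator (fun _ => (1 : ℝ)) (g x) := by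
    intro x
    by_cases hx : |g x| ≤ ε
    · simp [Set.indicator_of_mem, hx, abs_le.1 hx]
    · have : g x ∉ Set.Icc (-ε) ε := fun h => hx (abs_le.2 h)
      simp [Set.indicator_of_notMem, hx, this]
  -- the change of variables `s = g x` turns the integral into the length of `g '' s ∩ [-ε, ε]`
  simp_rw [hintegrand, ← integral_image_eq_integral_abs_deriv_smul hs hg hinj,
    setIntegral_indicator measurableSet_Icc, integral_const, smul_eq_mul, mul_one,
    measureReal_restrict_apply_univ]
  calc volume.real (g '' s ∩ Set.Icc (-ε) ε) ≤ volume.real (Set.Icc (-ε) ε) :=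
        measureReal_mono Set.inter_subset_right measure_Icc_lt_top.ne
    _ = 2 * ε := by rw [Real.volume_real_Icc_of_le (by linarith)]; ring

theorem integral_Icc_indicator_abs_deriv_le {g : ℝ → ℝ} (hg : Differentiable ℝ g)
    (hg' : Continuous (deriv g)) {ε : ℝ} (hε : 0 ≤ ε) (Z : Finset ℝ) {a b : ℝ}
    (hZ : ∀ t ∈ Set.Ioo a b, deriv g t = 0 → t ∈ Z) :
    ∫ t in Set.Icc a b, {t | |g t| ≤ ε}.indicator (fun t => |deriv g t|) t
      ≤ 2 * ε * (#Z + 1) := by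
  set F := {t | |g t| ≤ ε}.indicator fun t => |deriv g t|
  have hF : ∀ a b, IntegrableOn F (Set.Icc a b) := fun _ _ =>
    hg'.abs.integrableOn_Icc.indicator
      (isClosed_le hg.continuous.abs continuous_const).measurableSet
  induction Z using Finset.strongInduction generalizing a b with
  | H Z ih =>
  by_cases! hcrit : ∀ t ∈ Set.Ioo a b, deriv g t ≠ 0
  · calc _ ≤ 2 * ε := integral_indicator_abs_deriv_le_of_injOn measurableSet_Icc
            (fun x _ => (hg x).hasDerivAt.hasDerivWithinAt) (injOn_Icc_of_deriv_ne_zero hg hcrit) hε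
      _ ≤ 2 * ε * (#Z + 1) := le_mul_of_one_le_right (by positivity) (by simp)
  obtain ⟨t, ht, hzero⟩ := hcrit
  have htZ : t ∈ Z := hZ t ht hzero
  set Zl := Z.filter (· < t)
  set Zr := Z.filter (t < ·)
  have hcard : (#Zl : ℝ) + #Zr + 1 ≤ #Z := by
    exact_mod_cast card_filter_lt_add_card_filter_gt_lt htZ
  have hl := ih Zl (Finset.filter_ssubset.2 ⟨t, htZ, lt_irrefl t⟩) (a := a) (b := t)
    fun x hx hx0 => Finset.mem_filter.2 ⟨hZ x ⟨hx.1, hx.2.trans ht.2⟩ hx0, hx.2⟩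
  have hr := ih Zr (Finset.filter_ssubset.2 ⟨t, htZ, lt_irrefl t⟩) (a := t) (b := b)
    fun x hx hx0 => Finset.mem_filter.2 ⟨hZ x ⟨ht.1.trans hx.1, hx.2⟩ hx0, hx.1⟩
  have hsplit : ∫ x in Set.Icc a b, F x = (∫ x in Set.Icc a t, F x) + ∫ x in Set.Icc t b, F x := by
    simp only [integral_Icc_eq_integral_Ioc]
    rw [← Set.Ioc_union_Ioc_eq_Ioc ht.1.le ht.2.le]
    exact setIntegral_union (Set.Ioc_disjoint_Ioc_of_le le_rfl) measurableSet_Ioc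
      ((hF a t).mono_set Set.Ioc_subset_Icc_self) ((hF t b).mono_set Set.Ioc_subset_Icc_self)
  rw [hsplit]
  nlinarith

theorem injOn_exp_two_pi_I_mul_Ico :
    Set.InjOn (fun t : ℝ => Complex.exp (2 * π * Complex.I * t)) (Set.Ico 0 1) := by
  intro s hs t ht hst
  have h2π : (0 : ℝ) < 2 * π := by positivity
  have := Circle.exp_injOn_Ico (a := 0) (b := 2 * π) (by simp)
    (⟨by nlinarith [hs.1], by nlinarith [hs.2]⟩ : 2 * π * s ∈ Set.Ico 0 (2 * π))
    (⟨by nlinarith [ht.1], by nlinarith [ht.2]⟩ : 2 * π * t ∈ Set.Ico 0 (2 * π))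
    (Subtype.ext (by simp only [Circle.coe_exp]; push_cast; convert hst using 2 <;> ring))
  exact mul_left_cancel₀ h2π.ne' this

noncomputable def trigSum {ι : Type*} (K : Finset ι) (k : ι → ℤ) (a : ι → ℂ) (t : ℝ) : ℂ :=
  ∑ j ∈ K, a j * Complex.exp (2 * π * Complex.I * (k j * t))

section trigSum
variable {ι : Type*} (K : Finset ι) (k : ι → ℤ) (a : ι → ℂ)

theorem hasDerivAt_trigSum (t : ℝ) :
    HasDerivAt (trigSum K k a) (trigSum K k (fun j => 2 * π * Complex.I * k j * a j) t) t := by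
  unfold trigSum
  refine HasDerivAt.fun_sum fun j _ => ?_
  have hlin : HasDerivAt (fun t : ℝ => 2 * π * Complex.I * (k j * t))
      (2 * π * Complex.I * k j) t := by
    simpa using (((hasDerivAt_id t).ofReal_comp.const_mul (k j : ℂ)).const_mul (2 * π * Complex.I))
  exact (hlin.cexp.const_mul (a j)).congr_deriv (by ring)

theorem continuous_trigSum : Continuous (trigSum K k a) :=
  continuous_finsetSum _ fun _ _ =>
    continuous_const.mul
      ((continuous_const.mul (continuous_const.mul Complex.continuous_ofReal)).cexp)

theorem exists_polynomial_eval_exp_eq_trigSum {N : ℕ} (hk : ∀ j ∈ K, (k j).natAbs ≤ N) :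
    ∃ p : Polynomial ℂ, p.natDegree ≤ 2 * N ∧ ∀ t : ℝ,
      p.eval (Complex.exp (2 * π * Complex.I * t))
        = Complex.exp (2 * π * Complex.I * N * t) * trigSum K k a t := by
  classical
  refine ⟨∑ j ∈ K, Polynomial.C (a j) * Polynomial.X ^ (k j + N).toNat, ?_, fun t => ?_⟩
  · refine Polynomial.natDegree_sum_le_of_forall_le _ _ fun j hj => ?_
    refine (Polynomial.natDegree_C_mul_le _ _).trans ?_
    rw [Polynomial.natDegree_X_pow]
    have := hk j hj
    omega
  · simp only [Polynomial.eval_finsetSum, Polynomial.eval_mul, Polynomial.eval_C,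
      Polynomial.eval_pow, Polynomial.eval_X, trigSum, Finset.mul_sum]
    refine Finset.sum_congr rfl fun j hj => ?_
    have hexp : (((k j + N).toNat : ℕ) : ℂ) = k j + N := by
      have := hk j hj
      exact_mod_cast Int.toNat_of_nonneg (by omega)
    rw [← Complex.exp_nat_mul, hexp, mul_left_comm (Complex.exp _) (a j), ← Complex.exp_add]
    ring_nf

theorem trigSum_eq_zero_or_exists_finset_zeros {N : ℕ} (hk : ∀ j ∈ K, (k j).natAbs ≤ N) :
    (∀ t, trigSum K k a t = 0) ∨
      ∃ Z : Finset ℝ, #Z ≤ 2 * N ∧ ∀ t ∈ Set.Ico (0 : ℝ) 1, trigSum K k a t = 0 → t ∈ Z := by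
  classical
  obtain ⟨p, hdeg, hp⟩ := exists_polynomial_eval_exp_eq_trigSum K k a hk
  by_cases hp0 : p = 0
  · left
    intro t
    simpa [hp0, Complex.exp_ne_zero] using (hp t).symm
  right
  set zeros := {t ∈ Set.Ico (0 : ℝ) 1 | trigSum K k a t = 0}
  have hmaps : Set.MapsTo (fun t : ℝ => Complex.exp (2 * π * Complex.I * t)) zeros
      (p.roots.toFinset : Set ℂ) := by
    intro t ht
    simp [Polynomial.mem_roots hp0, hp t, ht.2]
  have hinj := injOn_exp_two_pi_I_mul_Ico.mono (Set.sep_subset _ _ : zeros ⊆ _)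
  have hfin : zeros.Finite :=
    Set.Finite.of_finite_image (p.roots.toFinset.finite_toSet.subset hmaps.image_subset) hinj
  refine ⟨hfin.toFinset, ?_, fun t ht h0 => hfin.mem_toFinset.2 ⟨ht, h0⟩⟩
  calc #hfin.toFinset = zeros.ncard := (Set.ncard_eq_toFinset_card _ hfin).symm
    _ ≤ (p.roots.toFinset : Set ℂ).ncard :=
        Set.ncard_le_ncard_of_injOn _ hmaps hinj p.roots.toFinset.finite_toSet
    _ = #p.roots.toFinset := Set.ncard_coe_finset _
    _ ≤ Multiset.card p.roots := Multiset.toFinset_card_le _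
    _ ≤ p.natDegree := Polynomial.card_roots' p
    _ ≤ 2 * N := hdeg

theorem integral_Icc_indicator_abs_deriv_le_of_trigSum {N : ℕ}
    (hk : ∀ j ∈ K, (k j).natAbs ≤ N) {g : ℝ → ℝ} (hg : ∀ t, (g t : ℂ) = trigSum K k a t)
    {ε : ℝ} (hε : 0 ≤ ε) :
    ∫ t in Set.Icc 0 1, {t | |g t| ≤ ε}.indicator (fun t => |deriv g t|) t
      ≤ 2 * ε * (2 * N + 1) := by
  set D := trigSum K k (fun j => 2 * π * Complex.I * k j * a j)
  have hgD : ∀ t, HasDerivAt g (D t).re t := fun t => by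
    simpa [Function.comp_def, ← hg] using
      Complex.reCLM.hasFDerivAt.comp_hasDerivAt t (hasDerivAt_trigSum K k a t)
  have hg_diff : Differentiable ℝ g := fun t => (hgD t).differentiableAt
  have hderiv : ∀ t, ((deriv g t : ℝ) : ℂ) = D t := fun t => by
    have := (hg_diff t).hasDerivAt.ofReal_comp
    rw [show (fun t => (g t : ℂ)) = trigSum K k a from funext hg] at this
    exact this.unique (hasDerivAt_trigSum K k a t)
  have hderiv_cont : Continuous (deriv g) := by
    have : deriv g = fun t => (D t).re := funext fun t => (hgD t).deriv
    rw [this]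
    exact Complex.continuous_re.comp (continuous_trigSum K k _)
  rcases trigSum_eq_zero_or_exists_finset_zeros K k (fun j => 2 * π * Complex.I * k j * a j) hk
    with hD0 | ⟨Z, hZcard, hZ⟩
  · have : ∀ t, deriv g t = 0 := fun t => by exact_mod_cast (hderiv t).trans (hD0 t)
    calc _ = (0 : ℝ) := by simp [this]
      _ ≤ _ := by positivity
  · calc _ ≤ 2 * ε * (#Z + 1) := integral_Icc_indicator_abs_deriv_le hg_diff hderiv_cont hε Z
          fun t ht h0 => hZ t (Set.Ioo_subset_Ico_self ht) ((hderiv t).symm.trans (by simp [h0]))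
      _ ≤ 2 * ε * (2 * N + 1) := by
        have : (#Z : ℝ) ≤ 2 * N := by exact_mod_cast hZcard
        nlinarith

end trigSum

theorem setIntegral_unitCube_le_of_forall_slice_le {m : ℕ} (i : Fin (m + 1))
    {F : (Fin (m + 1) → ℝ) → ℝ} (hF : IntegrableOn F (Set.univ.pi fun _ => Set.Icc 0 1))
    {C : ℝ} (hC : ∀ y : Fin m → ℝ, ∫ t in Set.Icc 0 1, F (i.insertNth t y) ≤ C) :
    ∫ x in Set.univ.pi (fun _ => Set.Icc 0 1), F x ≤ C := by
  set e := (MeasurableEquiv.piFinSuccAbove (fun _ => ℝ) i).symm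
  have he : MeasurePreserving e (volume.prod volume) volume :=
    (volume_preserving_piFinSuccAbove (fun _ => ℝ) i).symm
  have himage : e '' (Set.Icc 0 1 ×ˢ Set.univ.pi fun _ => Set.Icc 0 1)
      = Set.univ.pi fun _ => Set.Icc 0 1 := by
    rw [e.image_eq_preimage_symm]
    ext x
    simp only [e, MeasurableEquiv.symm_symm, MeasurableEquiv.piFinSuccAbove_apply, Set.mem_preimage,
      Set.mem_prod, Set.mem_univ_pi, i.forall_iff_succAbove (P := fun j => x j ∈ Set.Icc (0 : ℝ) 1)]
    rfl
  have : IsFiniteMeasure (volume.restrict (Set.univ.pi fun _ : Fin m => Set.Icc (0 : ℝ) 1)) :=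
    isFiniteMeasure_restrict.2 (isCompact_univ_pi fun _ => isCompact_Icc).measure_lt_top.ne
  rw [← himage] at hF ⊢
  rw [he.integrableOn_image e.measurableEmbedding, IntegrableOn, ← Measure.prod_restrict] at hF
  calc ∫ x in e '' _, F x = ∫ p in Set.Icc 0 1 ×ˢ Set.univ.pi (fun _ => Set.Icc 0 1), F (e p)
          ∂(volume.prod volume) := he.setIntegral_image_emb e.measurableEmbedding _ _
    _ = ∫ y in Set.univ.pi (fun _ => Set.Icc 0 1), ∫ t in Set.Icc 0 1, F (e (t, y)) := by
        rw [← Measure.prod_restrict]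
        exact integral_prod_symm _ hF
    _ ≤ ∫ _ in Set.univ.pi (fun _ : Fin m => Set.Icc (0 : ℝ) 1), C :=
        integral_mono hF.integral_prod_right (integrable_const C) hC
    _ = C := by simp [measureReal_def, Real.volume_Icc_pi]

theorem hasDerivAt_comp_insertNth {m : ℕ} {F : Type*} [NormedAddCommGroup F] [NormedSpace ℝ F]
    {f : (Fin (m + 1) → ℝ) → F} (hf : Differentiable ℝ f) (i : Fin (m + 1)) (y : Fin m → ℝ)
    (t : ℝ) :
    HasDerivAt (fun t => f (i.insertNth t y)) (fderiv ℝ f (i.insertNth t y) (Pi.single i 1)) t := by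
  have hline : HasDerivAt (fun t : ℝ => (i.insertNth t y : Fin (m + 1) → ℝ)) (Pi.single i 1) t := by
    convert hasDerivAt_update (i.insertNth 0 y) i t using 1
    exact funext fun s => by rw [Fin.update_insertNth]
  exact (hf _).hasFDerivAt.comp_hasDerivAt t hline

theorem contDiff_of_ofReal_eq_sum_exp {d : ℕ} {n : WithTop ℕ∞} (Λ : Finset (Fin d → ℤ))
    (c : (Fin d → ℤ) → ℂ) {f : (Fin d → ℝ) → ℝ}
    (hf : ∀ x : Fin d → ℝ, (f x : ℂ) =
      ∑ lam ∈ Λ, c lam * Complex.exp (2 * π * Complex.I * ∑ i, (lam i : ℂ) * (x i : ℂ))) :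
    ContDiff ℝ n f := by
  have hre : f = fun x => (∑ lam ∈ Λ, c lam *
      Complex.exp (2 * π * Complex.I * ∑ i, (lam i : ℂ) * (x i : ℂ))).re :=
    funext fun x => by rw [← hf, Complex.ofReal_re]
  rw [hre]
  exact Complex.reCLM.contDiff.comp <| ContDiff.sum fun lam _ => contDiff_const.mul <|
    Complex.contDiff_exp.comp <| contDiff_const.mul <| ContDiff.sum fun i _ => contDiff_const.mul <|
      Complex.ofRealCLM.contDiff.comp (contDiff_apply ℝ ℝ i)

theorem setIntegral_indicator_norm_fderiv_le_sum {ι : Type*} [Fintype ι] [DecidableEq ι]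
    {f : (ι → ℝ) → ℝ} (hf : Continuous (fderiv ℝ f)) {s T : Set (ι → ℝ)} (hs : IsCompact s)
    (hT : MeasurableSet T) :
    ∫ x in s, T.indicator (fun x => ‖fderiv ℝ f x‖) x
      ≤ ∑ i, ∫ x in s, T.indicator (fun x => |fderiv ℝ f x (Pi.single i 1)|) x := by
  have hint : ∀ i, IntegrableOn (T.indicator fun x => |fderiv ℝ f x (Pi.single i 1)|) s :=
    fun i => ((hf.clm_apply continuous_const).abs.continuousOn.integrableOn_compact hs).indicator hT
  rw [← integral_finsetSum _ fun i _ => hint i]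
  refine integral_mono_of_nonneg (Filter.Eventually.of_forall fun x =>
    Set.indicator_nonneg (fun _ _ => norm_nonneg _) x) (integrable_finsetSum _ fun i _ => hint i)
    (Filter.Eventually.of_forall fun x => ?_)
  by_cases hx : x ∈ T
  · simpa [Set.indicator_of_mem hx] using (fderiv ℝ f x).norm_le_sum_norm_apply_single
  · simp [Set.indicator_of_notMem hx]

theorem setIntegral_unitCube_indicator_abs_fderiv_single_le {d N : ℕ} (i : Fin d)
    (Λ : Finset (Fin d → ℤ)) (hΛ : ∀ lam ∈ Λ, (lam i).natAbs ≤ N) (c : (Fin d → ℤ) → ℂ)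
    {f : (Fin d → ℝ) → ℝ}
    (hf : ∀ x : Fin d → ℝ, (f x : ℂ) =
      ∑ lam ∈ Λ, c lam * Complex.exp (2 * π * Complex.I * ∑ i, (lam i : ℂ) * (x i : ℂ)))
    {ε : ℝ} (hε : 0 ≤ ε) :
    ∫ x in Set.univ.pi (fun _ => Set.Icc 0 1),
        {x | |f x| ≤ ε}.indicator (fun x => |fderiv ℝ f x (Pi.single i 1)|) x
      ≤ 2 * ε * (2 * N + 1) := by
  cases d with
  | zero => exact i.elim0
  | succ m =>
  have hf1 : ContDiff ℝ 1 f := contDiff_of_ofReal_eq_sum_exp Λ c hf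
  have hint : IntegrableOn ({x | |f x| ≤ ε}.indicator fun x => |fderiv ℝ f x (Pi.single i 1)|)
      (Set.univ.pi fun _ => Set.Icc 0 1) :=
    (((hf1.continuous_fderiv one_ne_zero).clm_apply continuous_const).abs.continuousOn
      |>.integrableOn_compact (isCompact_univ_pi fun _ => isCompact_Icc)).indicator
      (isClosed_le hf1.continuous.abs continuous_const).measurableSet
  refine setIntegral_unitCube_le_of_forall_slice_le i hint fun y => ?_
  set g : ℝ → ℝ := fun t => f (i.insertNth t y)
  have hg : ∀ t, (g t : ℂ) = trigSum Λ (fun lam => lam i)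
      (fun lam => c lam * Complex.exp (2 * π * Complex.I *
        ∑ j, (lam (i.succAbove j) : ℂ) * (y j : ℂ))) t := fun t => by
    simp only [g, hf, trigSum, Fin.sum_univ_succAbove _ i, Fin.insertNth_apply_same,
      Fin.insertNth_apply_succAbove, mul_add, Complex.exp_add]
    exact Finset.sum_congr rfl fun lam _ => by ring
  have hderiv : ∀ t, deriv g t = fderiv ℝ f (i.insertNth t y) (Pi.single i 1) := fun t =>
    (hasDerivAt_comp_insertNth (hf1.differentiable one_ne_zero) i y t).deriv
  simpa only [Set.indicator_apply, Set.mem_ofPred_eq, g, hderiv] using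
    integral_Icc_indicator_abs_deriv_le_of_trigSum Λ (fun lam => lam i) _ hΛ hg hε

theorem stmt6_general (d E : ℕ) (hE : 1 ≤ E)
    (Λ : Finset (Fin d → ℤ))
    (hΛ : ∀ lam ∈ Λ, ∑ i, (lam i)^2 = (E : ℤ))
    (c : (Fin d → ℤ) → ℂ) (f : (Fin d → ℝ) → ℝ)
    (hf : ∀ x : Fin d → ℝ, (f x : ℂ) =
      ∑ lam ∈ Λ, c lam * Complex.exp (2 * π * Complex.I * ∑ i, (lam i : ℂ) * (x i : ℂ)))
    (ε : ℝ) (hε : 0 < ε) :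
    (1 / (2 * ε)) *
      ∫ x in (Set.univ.pi fun _ : Fin d => Set.Icc (0 : ℝ) 1),
        Set.indicator {x : Fin d → ℝ | |f x| ≤ ε} (fun x => ‖fderiv ℝ f x‖) x
      ≤ 6 * d * Real.sqrt E := by
  have hf1 : ContDiff ℝ 1 f := contDiff_of_ofReal_eq_sum_exp Λ c hf
  have hpartial : ∀ i : Fin d, ∫ x in Set.univ.pi (fun _ => Set.Icc 0 1),
      {x | |f x| ≤ ε}.indicator (fun x => |fderiv ℝ f x (Pi.single i 1)|) x
        ≤ 2 * ε * (2 * Nat.sqrt E + 1) := fun i =>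
    setIntegral_unitCube_indicator_abs_fderiv_single_le i Λ
      (fun lam hlam => Int.natAbs_le_sqrt_of_sum_sq_eq (hΛ lam hlam) i) c hf hε.le
  have hsqrt : (2 * Nat.sqrt E + 1 : ℝ) ≤ 6 * Real.sqrt E := by
    have h1 : (1 : ℝ) ≤ Real.sqrt E := Real.one_le_sqrt.2 (by exact_mod_cast hE)
    linarith [Real.nat_sqrt_le_real_sqrt (a := E)]
  calc (1 / (2 * ε)) * ∫ x in Set.univ.pi (fun _ => Set.Icc 0 1),
        {x | |f x| ≤ ε}.indicator (fun x => ‖fderiv ℝ f x‖) x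
      ≤ (1 / (2 * ε)) * ∑ _i : Fin d, 2 * ε * (2 * Nat.sqrt E + 1) := by
        gcongr
        exact (setIntegral_indicator_norm_fderiv_le_sum (hf1.continuous_fderiv one_ne_zero)
          (isCompact_univ_pi fun _ => isCompact_Icc)
          (isClosed_le hf1.continuous.abs continuous_const).measurableSet).trans
          (Finset.sum_le_sum fun i _ => hpartial i)
    _ = d * (2 * Nat.sqrt E + 1) := by
        rw [Finset.sum_const, Finset.card_univ, Fintype.card_fin, nsmul_eq_mul]
        field_simp
    _ ≤ 6 * d * Real.sqrt E := by nlinarith [(Nat.cast_nonneg d : (0 : ℝ) ≤ d)]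

/-- For a real-valued eigenfunction `f(x) = Σ_{λ∈Λ} c_λ e^{2πi⟨λ,x⟩}` on the torus,
with frequencies of squared norm `E`, and any `ε > 0`,
`(1/(2ε)) ∫_{𝕋^d} 1_{|f|≤ε} |∇f| dx ≤ 6 d √E`. -/
theorem stmt6 (d E : ℕ) (hd : 1 ≤ d) (hE : 1 ≤ E)
    (Λ : Finset (Fin d → ℤ))
    (hΛ : ∀ lam ∈ Λ, ∑ i, (lam i)^2 = (E : ℤ))
    (c : (Fin d → ℤ) → ℂ) (f : (Fin d → ℝ) → ℝ)
    (hf : ∀ x : Fin d → ℝ, (f x : ℂ) =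
      ∑ lam ∈ Λ, c lam * Complex.exp (2 * π * Complex.I * ∑ i, (lam i : ℂ) * (x i : ℂ)))
    (ε : ℝ) (hε : 0 < ε) :
    (1 / (2 * ε)) *
      ∫ x in (Set.univ.pi fun _ : Fin d => Set.Icc (0 : ℝ) 1),
        Set.indicator {x : Fin d → ℝ | |f x| ≤ ε} (fun x => ‖fderiv ℝ f x‖) x
      ≤ 6 * d * Real.sqrt E :=
  stmt6_general d E hE Λ hΛ c f hf ε hε
end

section
/- Let u(z) = (2/N) Σ_{λ ∈ Λ/±} cos 2π⟨λ,z⟩. For each fixed index k, ∫_{𝕋^d} (∂u/∂z_k)(z)⁴ dz ≤ C · E²/N for a constant C depending only on d. -/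
/-!
The partial derivative `∂u/∂z_k` is the sine polynomial `F = -(4π/N) ∑_{λ ∈ Λ/±} λ_k sin 2π⟨λ,z⟩`.
Since `|λ_k| ≤ √E` and `|Λ/±| ≤ N`, pointwise `|F| ≤ 4π√E`. Since `Λ/±` contains no antipodal
pair, the sines `sin 2π⟨λ,z⟩` are orthogonal on the unit cube, so
`∫ F² = ½ (4π/N)² ∑ λ_k² ≤ 8π² E/N`. Hence `∫ F⁴ ≤ ‖F‖²_∞ ∫ F² ≤ 2⁷π⁴ E²/N`.
-/

open Real Finset MeasureTheory

theorem integral_univ_pi_prod {ι : Type*} [Fintype ι] {𝕜 : Type*} [RCLike 𝕜]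
    {α : ι → Type*} [∀ i, MeasureSpace (α i)] [∀ i, SigmaFinite (volume : Measure (α i))]
    (s : (i : ι) → Set (α i)) (f : (i : ι) → α i → 𝕜) :
    ∫ z in Set.univ.pi s, ∏ i, f i (z i) = ∏ i, ∫ t in s i, f i t := by
  rw [volume_pi, Measure.restrict_pi_pi]
  exact integral_fintype_prod_eq_prod f

theorem integral_Icc_exp_two_pi_I_int_mul (n : ℤ) :
    ∫ t in Set.Icc (0 : ℝ) 1, Complex.exp (2 * π * Complex.I * n * t) =
      if n = 0 then 1 else 0 := by
  rw [integral_Icc_eq_integral_Ioc, ← intervalIntegral.integral_of_le zero_le_one]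
  split_ifs with hn
  · simp [hn]
  · have hc : (2 * π * Complex.I * n : ℂ) ≠ 0 := by simp [pi_ne_zero, hn]
    rw [integral_exp_mul_complex hc]
    have : Complex.exp (2 * π * Complex.I * n) = 1 := by
      rw [← Complex.exp_int_mul_two_pi_mul_I n]; ring_nf
    simp [this]

theorem setIntegral_pow_four_le_mul_setIntegral_sq {α : Type*} [MeasurableSpace α] {μ : Measure α}
    {s : Set α} {f : α → ℝ} {M : ℝ} (hs : MeasurableSet s)
    (hf : IntegrableOn (fun x => f x ^ 2) s μ) (hM : ∀ x ∈ s, f x ^ 2 ≤ M) :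
    ∫ x in s, f x ^ 4 ∂μ ≤ M * ∫ x in s, f x ^ 2 ∂μ := by
  rw [← integral_const_mul]
  refine integral_mono_of_nonneg (ae_of_all _ fun x => by positivity) (hf.const_mul M)
    ((ae_restrict_iff' hs).mpr (ae_of_all _ fun x hx => ?_))
  have := hM x hx
  calc f x ^ 4 = f x ^ 2 * f x ^ 2 := by ring
    _ ≤ M * f x ^ 2 := by gcongr

abbrev unitCube (ι : Type*) [Fintype ι] : Set (ι → ℝ) := Set.univ.pi fun _ => Set.Icc 0 1

section UnitCube

variable {ι : Type*} [Fintype ι]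

theorem measurableSet_unitCube : MeasurableSet (unitCube ι) :=
  MeasurableSet.univ_pi fun _ => measurableSet_Icc

theorem Continuous.integrableOn_unitCube {E : Type*} [NormedAddCommGroup E]
    {f : (ι → ℝ) → E} (hf : Continuous f) : IntegrableOn f (unitCube ι) :=
  hf.continuousOn.integrableOn_compact (isCompact_univ_pi fun _ => isCompact_Icc)

noncomputable def phase (lam : ι → ℤ) (z : ι → ℝ) : ℝ := 2 * π * ∑ i, (lam i : ℝ) * z i

@[fun_prop]
theorem continuous_phase (lam : ι → ℤ) : Continuous (phase lam) := by
  unfold phase; fun_prop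

theorem phase_add (lam mu : ι → ℤ) (z : ι → ℝ) :
    phase (lam + mu) z = phase lam z + phase mu z := by
  simp only [phase, Pi.add_apply, Int.cast_add, add_mul, sum_add_distrib, mul_add]

theorem phase_sub (lam mu : ι → ℤ) (z : ι → ℝ) :
    phase (lam - mu) z = phase lam z - phase mu z := by
  simp only [phase, Pi.sub_apply, Int.cast_sub, sub_mul, sum_sub_distrib, mul_sub]

theorem hasFDerivAt_phase (lam : ι → ℤ) (z : ι → ℝ) :
    HasFDerivAt (phase lam)
      ((2 * π) • ∑ i, (lam i : ℝ) • ContinuousLinearMap.proj (R := ℝ) (φ := fun _ : ι => ℝ) i)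
      z :=
  (HasFDerivAt.fun_sum fun i _ => (hasFDerivAt_apply i z).const_mul (lam i : ℝ)).const_mul (2 * π)

theorem cos_phase_eq_re_prod (lam : ι → ℤ) (z : ι → ℝ) :
    cos (phase lam z) = (∏ i, Complex.exp (2 * π * Complex.I * lam i * z i)).re := by
  rw [← Complex.exp_sum, ← Complex.exp_ofReal_mul_I_re, phase]
  congr 2
  push_cast
  rw [mul_sum, sum_mul]
  exact sum_congr rfl fun i _ => by ring

theorem integral_unitCube_cos_phase (lam : ι → ℤ) :
    ∫ z in unitCube ι, cos (phase lam z) = if lam = 0 then 1 else 0 := by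
  have hre := integral_re (Continuous.integrableOn_unitCube (ι := ι)
    (f := fun z => ∏ i, Complex.exp (2 * π * Complex.I * lam i * z i)) (by fun_prop))
  simp only [RCLike.re_to_complex] at hre
  simp only [cos_phase_eq_re_prod]
  rw [hre, integral_univ_pi_prod (fun _ => Set.Icc (0 : ℝ) 1)
    fun i (t : ℝ) => Complex.exp (2 * π * Complex.I * lam i * t)]
  simp only [integral_Icc_exp_two_pi_I_int_mul]
  split_ifs with h
  · simp [h]
  · obtain ⟨i, hi⟩ := Function.ne_iff.mp h
    rw [prod_eq_zero (mem_univ i) (if_neg hi), Complex.zero_re]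

theorem integral_unitCube_sin_phase_mul_sin_phase {lam mu : ι → ℤ} (h : lam + mu ≠ 0) :
    ∫ z in unitCube ι, sin (phase lam z) * sin (phase mu z) = if lam = mu then 1 / 2 else 0 := by
  have hprod : ∀ z, sin (phase lam z) * sin (phase mu z) =
      (cos (phase (lam - mu) z) - cos (phase (lam + mu) z)) / 2 := by
    intro z
    rw [phase_sub, phase_add, cos_sub, cos_add]
    ring
  simp only [hprod]
  rw [integral_div, integral_sub (by fun_prop : Continuous _).integrableOn_unitCube
    (by fun_prop : Continuous _).integrableOn_unitCube, integral_unitCube_cos_phase,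
    integral_unitCube_cos_phase, if_neg h, sub_zero]
  simp only [sub_eq_zero]
  split_ifs <;> norm_num

noncomputable def sinPoly (S : Finset (ι → ℤ)) (a : (ι → ℤ) → ℝ) (z : ι → ℝ) : ℝ :=
  ∑ lam ∈ S, a lam * sin (phase lam z)

@[fun_prop]
theorem continuous_sinPoly (S : Finset (ι → ℤ)) (a : (ι → ℤ) → ℝ) :
    Continuous (sinPoly S a) := by
  unfold sinPoly; fun_prop

theorem fderiv_const_mul_sum_cos_phase_apply_single [DecidableEq ι] (c : ℝ)
    (S : Finset (ι → ℤ)) (k : ι) (z : ι → ℝ) :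
    fderiv ℝ (fun z => c * ∑ lam ∈ S, cos (phase lam z)) z (Pi.single k 1) =
      sinPoly S (fun lam => -(2 * π * c * lam k)) z := by
  rw [((HasFDerivAt.fun_sum (u := S) fun lam _ => (hasFDerivAt_phase lam z).cos).const_mul
    c).fderiv]
  simp only [smul_apply, _root_.sum_apply,
    ContinuousLinearMap.proj_apply, Pi.single_apply, smul_eq_mul, mul_ite, mul_one, mul_zero,
    sum_ite_eq', mem_univ, ↓reduceIte, neg_mul, sum_neg_distrib, mul_neg, mul_sum, sinPoly,
    neg_inj]
  exact sum_congr rfl fun _ _ => by ring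

variable {S : Finset (ι → ℤ)} {a : (ι → ℤ) → ℝ} {A : ℝ}

theorem sinPoly_sq_le (ha : ∀ lam ∈ S, |a lam| ≤ A) (z : ι → ℝ) :
    sinPoly S a z ^ 2 ≤ (S.card * A) ^ 2 := by
  have habs : |sinPoly S a z| ≤ S.card * A :=
    calc |sinPoly S a z| ≤ ∑ lam ∈ S, |a lam * sin (phase lam z)| := abs_sum_le_sum_abs _ _
      _ ≤ ∑ _ ∈ S, A := sum_le_sum fun lam hlam => by
          rw [abs_mul]
          exact (mul_le_of_le_one_right (abs_nonneg _) (abs_sin_le_one _)).trans (ha lam hlam)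
      _ = S.card * A := by rw [sum_const, nsmul_eq_mul]
  rw [← sq_abs]
  gcongr

theorem integral_unitCube_sinPoly_sq (hS : ∀ lam ∈ S, ∀ mu ∈ S, lam + mu ≠ 0) :
    ∫ z in unitCube ι, sinPoly S a z ^ 2 = (∑ lam ∈ S, a lam ^ 2) / 2 := by
  have hint : ∀ lam mu : ι → ℤ, IntegrableOn
      (fun z => a lam * a mu * (sin (phase lam z) * sin (phase mu z))) (unitCube ι) :=
    fun _ _ => (by fun_prop : Continuous _).integrableOn_unitCube
  have hsq : ∀ z, sinPoly S a z ^ 2 =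
      ∑ lam ∈ S, ∑ mu ∈ S, a lam * a mu * (sin (phase lam z) * sin (phase mu z)) := by
    intro z
    rw [sinPoly, sq, sum_mul_sum]
    exact sum_congr rfl fun _ _ => sum_congr rfl fun _ _ => by ring
  simp only [hsq]
  rw [integral_finsetSum _ fun lam _ => integrable_finsetSum _ fun mu _ => hint lam mu, sum_div]
  refine sum_congr rfl fun lam hlam => ?_
  rw [integral_finsetSum _ fun mu _ => hint lam mu]
  simp only [integral_const_mul]
  rw [sum_eq_single lam]
  · rw [integral_unitCube_sin_phase_mul_sin_phase (hS lam hlam lam hlam), if_pos rfl]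
    ring
  · intro mu hmu hne
    rw [integral_unitCube_sin_phase_mul_sin_phase (hS lam hlam mu hmu), if_neg (Ne.symm hne),
      mul_zero]
  · exact fun h => absurd hlam h

theorem integral_unitCube_sinPoly_pow_four_le (hS : ∀ lam ∈ S, ∀ mu ∈ S, lam + mu ≠ 0)
    (ha : ∀ lam ∈ S, |a lam| ≤ A) :
    ∫ z in unitCube ι, sinPoly S a z ^ 4 ≤ S.card ^ 3 * A ^ 4 / 2 := by
  have hL2 : ∫ z in unitCube ι, sinPoly S a z ^ 2 ≤ S.card * A ^ 2 / 2 := by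
    rw [integral_unitCube_sinPoly_sq hS]
    calc (∑ lam ∈ S, a lam ^ 2) / 2 ≤ (∑ _ ∈ S, A ^ 2) / 2 := by
          gcongr ?_ / 2
          exact sum_le_sum fun lam hlam => sq_le_sq.mpr ((ha lam hlam).trans (le_abs_self A))
      _ = S.card * A ^ 2 / 2 := by rw [sum_const, nsmul_eq_mul]
  calc ∫ z in unitCube ι, sinPoly S a z ^ 4
      ≤ (S.card * A) ^ 2 * ∫ z in unitCube ι, sinPoly S a z ^ 2 :=
        setIntegral_pow_four_le_mul_setIntegral_sq measurableSet_unitCube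
          (by fun_prop : Continuous _).integrableOn_unitCube fun z _ => sinPoly_sq_le ha z
    _ ≤ (S.card * A) ^ 2 * (S.card * A ^ 2 / 2) := by gcongr
    _ = S.card ^ 3 * A ^ 4 / 2 := by ring

end UnitCube

theorem stmt11_general (d : ℕ) :
    ∃ C : ℝ, 0 < C ∧
      ∀ (E : ℕ), 1 ≤ E →
      ∀ (Λ Λhalf : Finset (Fin d → ℤ)) (N : ℕ),
        (∀ lam : Fin d → ℤ, lam ∈ Λ ↔ ∑ i, (lam i)^2 = (E : ℤ)) →
        Λ.Nonempty → N = Λ.card →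
        Λhalf ⊆ Λ →
        (∀ lam ∈ Λ, (lam ∈ Λhalf ↔ -lam ∉ Λhalf)) →
        ∀ u : (Fin d → ℝ) → ℝ,
          (∀ z, u z = (2 / (N : ℝ)) *
            ∑ lam ∈ Λhalf, Real.cos (2 * π * ∑ i, (lam i : ℝ) * z i)) →
        ∀ k : Fin d,
          ∫ z in (Set.univ.pi fun _ : Fin d => Set.Icc (0 : ℝ) 1),
            (fderiv ℝ u z (Pi.single k 1))^4 ≤ C * (E : ℝ)^2 / N := by
  refine ⟨2 ^ 7 * π ^ 4, by positivity, ?_⟩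
  intro E _ Λ Λhalf N hΛ hne hN hsub hsym u hu k
  have hN0 : (0 : ℝ) < N := by rw [hN]; exact_mod_cast hne.card_pos
  have hcard : (Λhalf.card : ℝ) ≤ N := by rw [hN]; exact_mod_cast card_le_card hsub
  have hcoef : ∀ lam ∈ Λhalf, |-(2 * π * (2 / N) * lam k)| ≤ 4 * π / N * √E := by
    intro lam hlam
    have hsq := single_le_sum (fun i _ => sq_nonneg (lam i)) (mem_univ k)
    rw [(hΛ lam).mp (hsub hlam)] at hsq
    rw [abs_neg, abs_mul, abs_of_pos (by positivity), show 2 * π * (2 / N) = 4 * π / N by ring]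
    gcongr
    exact abs_le_sqrt (by exact_mod_cast hsq)
  have hnoAntipodal : ∀ lam ∈ Λhalf, ∀ mu ∈ Λhalf, lam + mu ≠ 0 := fun lam hlam mu hmu h => by
    rw [← neg_eq_of_add_eq_zero_right h] at hmu
    exact (hsym lam (hsub hlam)).mp hlam hmu
  have hu' : u = fun z => 2 / (N : ℝ) * ∑ lam ∈ Λhalf, cos (phase lam z) := funext hu
  simp only [hu', fderiv_const_mul_sum_cos_phase_apply_single]
  calc _ ≤ Λhalf.card ^ 3 * (4 * π / N * √E) ^ 4 / 2 :=
        integral_unitCube_sinPoly_pow_four_le hnoAntipodal hcoef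
    _ ≤ N ^ 3 * (4 * π / N * √E) ^ 4 / 2 := by gcongr
    _ = 2 ^ 7 * π ^ 4 * E ^ 2 / N := by
        have hE : √(E : ℝ) ^ 4 = E ^ 2 := by
          rw [show 4 = 2 * 2 from rfl, pow_mul, sq_sqrt (Nat.cast_nonneg E)]
        rw [mul_pow, hE]
        field_simp
        ring

/-- Fourth-moment bound for the first partials of the two-point function:
`∫_{𝕋^d} (∂u/∂z_k)⁴ dz ≤ C·E²/N`, with `C` depending only on `d`. -/
theorem stmt11 (d : ℕ) (hd : 1 ≤ d) :
    ∃ C : ℝ, 0 < C ∧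
      ∀ (E : ℕ), 1 ≤ E →
      ∀ (Λ Λhalf : Finset (Fin d → ℤ)) (N : ℕ),
        (∀ lam : Fin d → ℤ, lam ∈ Λ ↔ ∑ i, (lam i)^2 = (E : ℤ)) →
        Λ.Nonempty → N = Λ.card →
        Λhalf ⊆ Λ →
        (∀ lam ∈ Λ, (lam ∈ Λhalf ↔ -lam ∉ Λhalf)) →
        ∀ u : (Fin d → ℝ) → ℝ,
          (∀ z, u z = (2 / (N : ℝ)) *
            ∑ lam ∈ Λhalf, Real.cos (2 * π * ∑ i, (lam i : ℝ) * z i)) →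
        ∀ k : Fin d,
          ∫ z in (Set.univ.pi fun _ : Fin d => Set.Icc (0 : ℝ) 1),
            (fderiv ℝ u z (Pi.single k 1))^4 ≤ C * (E : ℝ)^2 / N :=
  stmt11_general d
end

section
/- Let d ≥ 2, let Λ = {λ ∈ ℤ^d : |λ|² = E} with |Λ| sufficiently large (depending on d), and suppose α, β ∈ ℝ and A, B ∈ ℝ^d satisfy ⟨A, λ⟩ · ⟨B, λ⟩ = β² - α² for all λ ∈ Λ. Then A = 0 or B = 0. -/
open Finset

private lemma sum_mul_update {d : ℕ} (A : Fin d → ℝ) (lam : Fin d → ℤ) (k : Fin d) (v : ℤ) :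
    ∑ i, A i * ((Function.update lam k v) i : ℝ)
      = (∑ i, A i * (lam i : ℝ)) - A k * (lam k : ℝ) + A k * (v : ℝ) := by
  have he : ∑ i ∈ univ.erase k, A i * ((Function.update lam k v) i : ℝ)
      = ∑ i ∈ univ.erase k, A i * (lam i : ℝ) :=
    Finset.sum_congr rfl fun i hi => by
      rw [Function.update_of_ne (Finset.ne_of_mem_erase hi)]
  have h1 := Finset.sum_erase_add univ
    (fun i => A i * ((Function.update lam k v) i : ℝ)) (Finset.mem_univ k)
  have h2 := Finset.sum_erase_add univ (fun i => A i * (lam i : ℝ)) (Finset.mem_univ k)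
  rw [← h1, ← h2, he]
  simp only [Function.update_self]
  ring

private lemma sq_sum_update {d : ℕ} (lam : Fin d → ℤ) (k : Fin d) (v : ℤ) :
    ∑ i, ((Function.update lam k v) i)^2 = (∑ i, (lam i)^2) - (lam k)^2 + v^2 := by
  have he : ∑ i ∈ univ.erase k, ((Function.update lam k v) i)^2
      = ∑ i ∈ univ.erase k, (lam i)^2 :=
    Finset.sum_congr rfl fun i hi => by
      rw [Function.update_of_ne (Finset.ne_of_mem_erase hi)]
  have h1 := Finset.sum_erase_add univ
    (fun i => ((Function.update lam k v) i)^2) (Finset.mem_univ k)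
  have h2 := Finset.sum_erase_add univ (fun i => (lam i)^2) (Finset.mem_univ k)
  rw [← h1, ← h2, he]
  simp only [Function.update_self]
  ring

private lemma sum_split2 {d : ℕ} (f : Fin d → ℝ) (i j : Fin d) (hij : i ≠ j) :
    ∑ k, f k = f i + f j + ∑ k ∈ (univ.erase i).erase j, f k := by
  rw [← Finset.sum_erase_add univ f (Finset.mem_univ i),
      ← Finset.sum_erase_add (univ.erase i) f
        (Finset.mem_erase.mpr ⟨hij.symm, Finset.mem_univ j⟩)]
  ring

private lemma exists_perm {d : ℕ} {i j p q : Fin d} (hij : i ≠ j) (hpq : p ≠ q) :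
    ∃ σ : Equiv.Perm (Fin d), σ i = p ∧ σ j = q := by
  refine ⟨(Equiv.swap i p).trans (Equiv.swap ((Equiv.swap i p) j) q), ?_, ?_⟩
  · simp only [Equiv.trans_apply, Equiv.swap_apply_left]
    apply Equiv.swap_apply_of_ne_of_ne
    · intro h
      exact hij ((Equiv.swap i p).injective ((Equiv.swap_apply_left i p).trans h))
    · exact hpq
  · simp only [Equiv.trans_apply]
    exact Equiv.swap_apply_left _ _

/-- If `d ≥ 2`, `Λ = {λ ∈ ℤ^d : |λ|² = E}` has sufficiently many elements
(depending on `d`), and `⟨A,λ⟩⟨B,λ⟩ = β² - α²` for all `λ ∈ Λ`, then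
`A = 0` or `B = 0`. -/
theorem stmt15 (d : ℕ) (hd : 2 ≤ d) :
    ∃ n₀ : ℕ, ∀ (E : ℕ), 1 ≤ E →
      ∀ Λ : Finset (Fin d → ℤ),
        (∀ lam : Fin d → ℤ, lam ∈ Λ ↔ ∑ i, (lam i)^2 = (E : ℤ)) →
        n₀ ≤ Λ.card →
        ∀ (α β : ℝ) (A B : Fin d → ℝ),
          (∀ lam ∈ Λ,
            (∑ i, A i * (lam i : ℝ)) * (∑ i, B i * (lam i : ℝ)) = β^2 - α^2) →
          A = 0 ∨ B = 0 := by
  refine ⟨2^d + 2*d + 1, ?_⟩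
  intro E hE Λ hΛ hcard α β A B hAB
  have hd0 : 0 < d := by omega
  have hpow : 1 ≤ 2^d := Nat.one_le_two_pow
  -- closure under sign flip of one coordinate
  have hupd : ∀ lam ∈ Λ, ∀ k : Fin d, Function.update lam k (-(lam k)) ∈ Λ := by
    intro lam hl k
    apply (hΛ _).mpr
    rw [sq_sum_update]
    linear_combination (hΛ lam).mp hl
  -- closure under permutations
  have hperm : ∀ lam ∈ Λ, ∀ σ : Equiv.Perm (Fin d), (fun i => lam (σ i)) ∈ Λ := by
    intro lam hl σ
    apply (hΛ _).mpr
    exact (Equiv.sum_comp σ (fun i => (lam i)^2)).trans ((hΛ lam).mp hl)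
  have hne : Λ.Nonempty := Finset.card_pos.mp (by omega)
  -- witness with two nonzero coordinates
  have hwit1 : ∃ μ ∈ Λ, ∃ p q : Fin d, p ≠ q ∧ μ p ≠ 0 ∧ μ q ≠ 0 := by
    by_contra hcon
    push_neg at hcon
    obtain ⟨lam₀, hl₀⟩ := hne
    have hexists : ∀ lam ∈ Λ, ∃ i, lam i ≠ 0 := by
      intro lam hl
      by_contra hz
      push_neg at hz
      have h := (hΛ lam).mp hl
      rw [Finset.sum_eq_zero (fun i _ => by rw [hz i]; ring)] at h
      omega
    have hone : ∀ lam ∈ Λ, ∀ i, lam i ≠ 0 →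
        (lam i)^2 = (E:ℤ) ∧ ∀ j, j ≠ i → lam j = 0 := by
      intro lam hl i hi
      have hz : ∀ j, j ≠ i → lam j = 0 := fun j hj => hcon lam hl i j (Ne.symm hj) hi
      refine ⟨?_, hz⟩
      have h := (hΛ lam).mp hl
      rw [Finset.sum_eq_single i (fun j _ hj => by rw [hz j hj]; ring)
        (fun h => absurd (Finset.mem_univ i) h)] at h
      exact h
    obtain ⟨i₀, hi₀⟩ := hexists lam₀ hl₀
    set v₀ := lam₀ i₀ with hv₀def
    have hv₀E : v₀^2 = (E:ℤ) := (hone lam₀ hl₀ i₀ hi₀).1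
    have hv0 : v₀ ≠ 0 := hi₀
    have hsub : Λ ⊆ Finset.image
        (fun x : Fin d × Bool => Function.update (0 : Fin d → ℤ) x.1
          (if x.2 then v₀ else -v₀)) univ := by
      intro lam hl
      obtain ⟨i, hi⟩ := hexists lam hl
      obtain ⟨hiE, hz⟩ := hone lam hl i hi
      have hval : lam i = v₀ ∨ lam i = -v₀ := by
        have h : (lam i - v₀) * (lam i + v₀) = 0 := by linear_combination hiE - hv₀E
        rcases mul_eq_zero.mp h with h | h
        · left; linarith
        · right; linarith
      refine Finset.mem_image.mpr ⟨(i, decide (lam i = v₀)), Finset.mem_univ _, ?_⟩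
      funext j
      by_cases hj : j = i
      · subst hj
        rcases hval with h | h
        · simp [Function.update_self, h]
        · have hne' : lam j ≠ v₀ := by
            rw [h]; intro hh; apply hv0; omega
          simp only [Function.update_self, h, hne', decide_eq_true_eq]
          rw [if_neg (show ¬(-v₀ = v₀) by omega)]
      · rw [Function.update_of_ne hj, hz j hj]
        rfl
    have hc1 : Λ.card ≤ 2 * d := by
      calc Λ.card ≤ _ := Finset.card_le_card hsub
        _ ≤ (univ : Finset (Fin d × Bool)).card := Finset.card_image_le
        _ = 2 * d := by simp [Finset.card_univ, mul_comm]
    omega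
  -- witness with two coordinates of different squares
  have hwit2 : ∃ ν ∈ Λ, ∃ p q : Fin d, (ν p)^2 ≠ (ν q)^2 := by
    by_contra hcon
    push_neg at hcon
    obtain ⟨lam₀, hl₀⟩ := hne
    have hEeq : ∀ lam ∈ Λ, ∀ j, (d:ℤ) * (lam j)^2 = (E:ℤ) := by
      intro lam hl j
      have h := (hΛ lam).mp hl
      have hc : ∑ k, (lam k)^2 = ∑ _k : Fin d, (lam j)^2 :=
        Finset.sum_congr rfl fun k _ => hcon lam hl k j
      rw [hc, Finset.sum_const, Finset.card_univ, Fintype.card_fin, nsmul_eq_mul] at h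
      exact_mod_cast h
    set v₀ := lam₀ ⟨0, hd0⟩ with hv₀def
    have hlam₀ : (d:ℤ) * v₀^2 = (E:ℤ) := hEeq lam₀ hl₀ _
    have hv0 : v₀ ≠ 0 := by
      intro h0
      rw [h0] at hlam₀
      simp at hlam₀
      omega
    have hval : ∀ lam ∈ Λ, ∀ j, lam j = v₀ ∨ lam j = -v₀ := by
      intro lam hl j
      have h1 := hEeq lam hl j
      have hsq : (lam j)^2 = v₀^2 := by
        have hd' : (d:ℤ) ≠ 0 := by exact_mod_cast hd0.ne'
        exact mul_left_cancel₀ hd' (by rw [h1, hlam₀])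
      have h : (lam j - v₀) * (lam j + v₀) = 0 := by linear_combination hsq
      rcases mul_eq_zero.mp h with h | h
      · left; linarith
      · right; linarith
    have hsub : Λ ⊆ Finset.image
        (fun s : Fin d → Bool => fun j => if s j then v₀ else -v₀) univ := by
      intro lam hl
      refine Finset.mem_image.mpr ⟨fun j => decide (lam j = v₀), Finset.mem_univ _, ?_⟩
      funext j
      by_cases h : lam j = v₀
      · simp [h]
      · have h' := (hval lam hl j).resolve_left h
        simp only [h, h', decide_eq_true_eq]
        rw [if_neg (show ¬(-v₀ = v₀) by omega)]
    have hc1 : Λ.card ≤ 2 ^ d := by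
      calc Λ.card ≤ _ := Finset.card_le_card hsub
        _ ≤ (univ : Finset (Fin d → Bool)).card := Finset.card_image_le
        _ = 2 ^ d := by simp [Finset.card_univ]
    omega
  -- key four-flip identity
  have key : ∀ lam ∈ Λ, ∀ k l, k ≠ l →
      (lam k : ℝ) * (lam l : ℝ) * (A k * B l + A l * B k) = 0 := by
    intro lam hl k l hkl
    have hl1 : Function.update lam k (-(lam k)) ∈ Λ := hupd lam hl k
    have hl2 : Function.update lam l (-(lam l)) ∈ Λ := hupd lam hl l
    have hl12 : Function.update (Function.update lam k (-(lam k))) l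
        (-(Function.update lam k (-(lam k)) l)) ∈ Λ := hupd _ hl1 l
    have e0 := hAB lam hl
    have e1 := hAB _ hl1
    have e2 := hAB _ hl2
    have e12 := hAB _ hl12
    simp only [sum_mul_update] at e1 e2 e12
    rw [Function.update_of_ne hkl.symm] at e12
    push_cast at e1 e2 e12
    linear_combination (e0 - e1 - e2 + e12) / 4
  -- relation (I)
  have hI : ∀ k l, k ≠ l → A k * B l + A l * B k = 0 := by
    obtain ⟨μ, hμ, p, q, hpq, hp, hq⟩ := hwit1
    intro k l hkl
    obtain ⟨σ, hσk, hσl⟩ := exists_perm hkl hpq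
    have hmem := hperm μ hμ σ
    have h := key _ hmem k l hkl
    simp only [hσk, hσl] at h
    have hpr : (μ p : ℝ) ≠ 0 := Int.cast_ne_zero.mpr hp
    have hqr : (μ q : ℝ) ≠ 0 := Int.cast_ne_zero.mpr hq
    rcases mul_eq_zero.mp h with h' | h'
    · rcases mul_eq_zero.mp h' with h'' | h''
      · exact absurd h'' hpr
      · exact absurd h'' hqr
    · exact h'
  -- diagonal sum identity
  have hSum : ∀ lam ∈ Λ, ∑ k, (A k * B k) * (lam k : ℝ)^2 = β^2 - α^2 := by
    intro lam hl
    have e0 := hAB lam hl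
    have hT : ∑ i, ∑ j, (A i * (lam i:ℝ)) * (B j * (lam j:ℝ)) = β^2 - α^2 := by
      rw [← Finset.sum_mul_sum]
      exact e0
    have hT' : ∑ i, ∑ j, (A j * (lam j:ℝ)) * (B i * (lam i:ℝ)) = β^2 - α^2 := by
      rw [Finset.sum_comm]
      exact hT
    have hdiag : ∀ i : Fin d,
        ∑ j, ((A i * (lam i:ℝ)) * (B j * (lam j:ℝ))
          + (A j * (lam j:ℝ)) * (B i * (lam i:ℝ)))
        = 2 * ((A i * B i) * (lam i:ℝ)^2) := by
      intro i
      rw [Finset.sum_eq_single i ?_ (fun h => absurd (Finset.mem_univ i) h)]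
      · ring
      · intro j _ hji
        have h := hI i j (Ne.symm hji)
        linear_combination ((lam i : ℝ) * (lam j : ℝ)) * h
    have hbig : ∑ i, ∑ j, ((A i * (lam i:ℝ)) * (B j * (lam j:ℝ))
        + (A j * (lam j:ℝ)) * (B i * (lam i:ℝ))) = 2*(β^2-α^2) := by
      simp only [Finset.sum_add_distrib, hT, hT']
      ring
    rw [Finset.sum_congr rfl (fun i _ => hdiag i), ← Finset.mul_sum] at hbig
    linarith
  -- relation (II): A i * B i constant
  have hII : ∀ i j : Fin d, A i * B i = A j * B j := by
    obtain ⟨ν, hν, p, q, hpq2⟩ := hwit2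
    have hpq : p ≠ q := fun h => hpq2 (by rw [h])
    intro i j
    rcases eq_or_ne i j with rfl | hij
    · rfl
    obtain ⟨σ, hσi, hσj⟩ := exists_perm hij hpq
    have hmem : (fun k => ν (σ k)) ∈ Λ := hperm ν hν σ
    have hmem' : (fun k => ν (σ (Equiv.swap i j k))) ∈ Λ := hperm _ hmem (Equiv.swap i j)
    have h1 := hSum _ hmem
    have h2 := hSum _ hmem'
    rw [sum_split2 _ i j hij] at h1 h2
    simp only [Equiv.swap_apply_left, Equiv.swap_apply_right, hσi, hσj] at h1 h2
    have herase : ∑ k ∈ (univ.erase i).erase j,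
        (A k * B k) * ((ν (σ (Equiv.swap i j k)) : ℤ) : ℝ)^2
        = ∑ k ∈ (univ.erase i).erase j, (A k * B k) * ((ν (σ k) : ℤ) : ℝ)^2 := by
      refine Finset.sum_congr rfl fun k hk => ?_
      have hki : k ≠ i := Finset.ne_of_mem_erase (Finset.mem_of_mem_erase hk)
      have hkj : k ≠ j := Finset.ne_of_mem_erase hk
      rw [Equiv.swap_apply_of_ne_of_ne hki hkj]
    rw [herase] at h2
    have hXY : ((ν p : ℤ) : ℝ)^2 ≠ ((ν q : ℤ) : ℝ)^2 := by
      intro h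
      apply hpq2
      exact_mod_cast h
    have hfact : (A i * B i - A j * B j) * (((ν p : ℤ):ℝ)^2 - ((ν q : ℤ):ℝ)^2) = 0 := by
      linear_combination h1 - h2
    rcases mul_eq_zero.mp hfact with h | h
    · linarith
    · exact absurd (by linarith : ((ν p : ℤ):ℝ)^2 = ((ν q : ℤ):ℝ)^2) hXY
  -- conclusion
  by_cases hA0 : A = 0
  · exact Or.inl hA0
  · right
    obtain ⟨p, hp⟩ := Function.ne_iff.mp hA0
    simp only [Pi.zero_apply] at hp
    have h01 : (⟨0, by omega⟩ : Fin d) ≠ (⟨1, by omega⟩ : Fin d) := by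
      intro h
      simpa using congrArg Fin.val h
    have ht0 : A ⟨0, by omega⟩ * B (⟨0, by omega⟩ : Fin d) = 0 := by
      have e1 := hI ⟨0, by omega⟩ ⟨1, by omega⟩ h01
      have e2 := hII (⟨0, by omega⟩ : Fin d) ⟨1, by omega⟩
      have hsq : (A ⟨0, by omega⟩ * B (⟨0, by omega⟩ : Fin d))^2
          + (A ⟨1, by omega⟩ * B (⟨0, by omega⟩ : Fin d))^2 = 0 := by
        linear_combination (A ⟨1, by omega⟩ * B (⟨0, by omega⟩ : Fin d)) * e1
          + (A ⟨0, by omega⟩ * B (⟨0, by omega⟩ : Fin d)) * e2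
      nlinarith [sq_nonneg (A ⟨0, by omega⟩ * B (⟨0, by omega⟩ : Fin d)),
        sq_nonneg (A ⟨1, by omega⟩ * B (⟨0, by omega⟩ : Fin d))]
    have hti : ∀ i, A i * B i = 0 := fun i => (hII i ⟨0, by omega⟩).trans ht0
    funext j
    show B j = (0 : Fin d → ℝ) j
    rw [Pi.zero_apply]
    by_cases hpj : p = j
    · subst hpj
      exact (mul_eq_zero.mp (hti p)).resolve_left hp
    · have e1 := hI p j hpj
      have hsq : (A p * B j)^2 = 0 := by
        linear_combination (A p * B j) * e1 - (A j * B j) * (hti p)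
      have := pow_eq_zero_iff (two_ne_zero) |>.mp hsq
      exact (mul_eq_zero.mp this).resolve_left hp
end

section
/- Let U, V be unit vectors in ℝ^N with ⟨U,V⟩ = u, u² ≠ 1, and let ε₁, ε₂ > 0. Then the Gaussian measure (with density (2π)^{-N/2} e^{-|f|²/2}) of the set {f ∈ ℝ^N : |⟨f,U⟩| ≤ ε₁ and |⟨f,V⟩| ≤ ε₂}, weighted by |f|², satisfies ∫_{|⟨f,U⟩|≤ε₁, |⟨f,V⟩|≤ε₂} |f|² e^{-|f|²/2} df ≤ C_N · ε₁ε₂/√(1-u²) for a constant C_N depending only on N. -/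
/-!
Write `u = ⟪U, V⟫` and `K = span {U, V} ⊆ ℝ^N`. Since `‖f‖² e^{-‖f‖²/2} ≤ 4 e^{-‖f‖²/4}` and
`‖f‖² ≥ ‖f_{K^⊥}‖²`, the integrand is bounded by `4 · 1_P(f_K) · e^{-‖f_{K^⊥}‖²/4}`, where
`P ⊆ K` is the parallelogram `{|⟪k, U⟫| ≤ ε₁, |⟪k, V⟫| ≤ ε₂}`. Lebesgue measure on `ℝ^N` is the
product of the Lebesgue measures on `K` and `K^⊥`, so the integral is at most `4 · area(P)` times a
Gaussian integral over `K^⊥`, which is at most `(4π)^{N/2}`. In the orthonormal basis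
`U, (V - uU)/√(1-u²)` of `K`, `P` has area `4ε₁ε₂/√(1-u²)`.
-/

open Real MeasureTheory Module
open scoped RealInnerProductSpace

lemma mul_exp_neg_half_le (t : ℝ) : t * exp (-t / 2) ≤ 4 * exp (-t / 4) := by
  have h : t ≤ 4 * exp (t / 4) := by linarith [add_one_le_exp (t / 4)]
  calc t * exp (-t / 2) ≤ 4 * exp (t / 4) * exp (-t / 2) :=
        mul_le_mul_of_nonneg_right h (exp_pos _).le
    _ = 4 * exp (-t / 4) := by rw [mul_assoc, ← exp_add]; ring_nf

lemma measurableSet_parallelogram (u s ε₁ ε₂ : ℝ) :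
    MeasurableSet {p : ℝ × ℝ | |p.1| ≤ ε₁ ∧ |u * p.1 + s * p.2| ≤ ε₂} := by
  measurability

lemma volume_parallelogram {u s : ℝ} (hs : 0 < s) (ε₁ ε₂ : ℝ) :
    volume {p : ℝ × ℝ | |p.1| ≤ ε₁ ∧ |u * p.1 + s * p.2| ≤ ε₂} =
      ENNReal.ofReal (2 * ε₁) * ENNReal.ofReal (2 * ε₂ / s) := by
  have hslice (x : ℝ) : volume {y : ℝ | |u * x + s * y| ≤ ε₂} = ENNReal.ofReal (2 * ε₂ / s) := by
    have : {y : ℝ | |u * x + s * y| ≤ ε₂} = Set.Icc ((-ε₂ - u * x) / s) ((ε₂ - u * x) / s) := by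
      ext y
      simp only [Set.mem_Icc, abs_le, div_le_iff₀ hs, le_div_iff₀ hs]
      constructor <;> rintro ⟨h₁, h₂⟩ <;> constructor <;> linarith
    rw [this, Real.volume_Icc]
    congr 1
    ring
  rw [Measure.volume_eq_prod, Measure.prod_apply (measurableSet_parallelogram u s ε₁ ε₂)]
  have hsection (x : ℝ) :
      volume (Prod.mk x ⁻¹' {p : ℝ × ℝ | |p.1| ≤ ε₁ ∧ |u * p.1 + s * p.2| ≤ ε₂}) =
        (Set.Icc (-ε₁) ε₁).indicator (fun _ => ENNReal.ofReal (2 * ε₂ / s)) x := by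
    by_cases hx : |x| ≤ ε₁
    · rw [Set.indicator_of_mem (Set.mem_Icc.2 (abs_le.1 hx)), ← hslice x]
      congr 1
      ext y
      simp [hx]
    · rw [Set.indicator_of_notMem (fun h => hx (abs_le.2 (Set.mem_Icc.1 h)))]
      simp [hx]
  simp_rw [hsection, lintegral_indicator_const measurableSet_Icc, Real.volume_Icc]
  rw [mul_comm]
  congr 2
  ring

section

variable {E : Type*} [NormedAddCommGroup E] [InnerProductSpace ℝ E]

lemma orthonormal_pair_of_inner_sq_lt_one {U V : E} (hU : ‖U‖ = 1) (hV : ‖V‖ = 1)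
    (hUV : ⟪U, V⟫ ^ 2 < 1) :
    Orthonormal ℝ ![U, (√(1 - ⟪U, V⟫ ^ 2))⁻¹ • (V - ⟪U, V⟫ • U)] := by
  have hs : 0 < √(1 - ⟪U, V⟫ ^ 2) := sqrt_pos.2 (by linarith)
  have hs2 : √(1 - ⟪U, V⟫ ^ 2) ^ 2 = 1 - ⟪U, V⟫ ^ 2 := sq_sqrt (by linarith)
  have hUU : ⟪U, U⟫ = 1 := by rw [real_inner_self_eq_norm_sq, hU, one_pow]
  have hVV : ⟪V, V⟫ = 1 := by rw [real_inner_self_eq_norm_sq, hV, one_pow]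
  rw [orthonormal_iff_ite]
  simp only [Fin.forall_fin_two, Matrix.cons_val_zero, Matrix.cons_val_one]
  simp only [real_inner_smul_left, real_inner_smul_right, inner_sub_left, inner_sub_right, hUU,
    hVV, real_inner_comm U V]
  refine ⟨⟨rfl, by simp⟩, by simp, ?_⟩
  simp only [if_true]
  field_simp
  linear_combination -hs2

lemma linearIndependent_pair_of_inner_sq_lt_one {U V : E} (hU : ‖U‖ = 1) (hV : ‖V‖ = 1)
    (hUV : ⟪U, V⟫ ^ 2 < 1) : LinearIndependent ℝ ![U, V] := by
  rw [LinearIndependent.pair_iff]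
  intro a b hab
  have h₁ := congrArg (⟪U, ·⟫) hab
  have h₂ := congrArg (⟪V, ·⟫) hab
  simp only [inner_add_right, real_inner_smul_right, real_inner_self_eq_norm_sq, hU, hV,
    real_inner_comm U V, inner_zero_right, one_pow, mul_one] at h₁ h₂
  have hb : b * (1 - ⟪U, V⟫ ^ 2) = 0 := by linear_combination h₂ - ⟪U, V⟫ * h₁
  obtain rfl : b = 0 := (mul_eq_zero.1 hb).resolve_right (by linarith)
  exact ⟨by simpa using h₁, rfl⟩

lemma volume_inner_slabs_of_finrank_eq_two [FiniteDimensional ℝ E] [MeasurableSpace E]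
    [BorelSpace E] (hE : finrank ℝ E = 2) {U V : E} (hU : ‖U‖ = 1) (hV : ‖V‖ = 1)
    (hUV : ⟪U, V⟫ ^ 2 < 1) (ε₁ ε₂ : ℝ) :
    volume {x : E | |⟪x, U⟫| ≤ ε₁ ∧ |⟪x, V⟫| ≤ ε₂} =
      ENNReal.ofReal (2 * ε₁) * ENNReal.ofReal (2 * ε₂ / √(1 - ⟪U, V⟫ ^ 2)) := by
  have hon := orthonormal_pair_of_inner_sq_lt_one hU hV hUV
  set u := ⟪U, V⟫
  set s := √(1 - u ^ 2)
  set W := s⁻¹ • (V - u • U)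
  have hs : 0 < s := sqrt_pos.2 (by linarith)
  have hinner (x : E) : ⟪x, V⟫ = u * ⟪x, U⟫ + s * ⟪x, W⟫ := by
    rw [real_inner_smul_right, inner_sub_right, real_inner_smul_right, ← mul_assoc,
      mul_inv_cancel₀ hs.ne', one_mul]
    ring
  let b := (basisOfOrthonormalOfCardEqFinrank hon (by simp [hE])).toOrthonormalBasis
    (by rwa [coe_basisOfOrthonormalOfCardEqFinrank])
  have hb (i : Fin 2) : (b i : E) = ![U, W] i := by
    simp [b, coe_basisOfOrthonormalOfCardEqFinrank]
  have hcoord : MeasurePreserving (fun x : E => (⟪x, U⟫, ⟪x, W⟫)) := by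
    have : (fun x : E => (⟪x, U⟫, ⟪x, W⟫)) =
        MeasurableEquiv.finTwoArrow ∘ WithLp.ofLp ∘ b.repr := by
      ext x <;> simp [b.repr_apply_apply, hb, real_inner_comm]
    rw [this]
    exact (volume_preserving_finTwoArrow ℝ).comp
      ((PiLp.volume_preserving_ofLp _).comp b.measurePreserving_repr)
  have hpre : {x : E | |⟪x, U⟫| ≤ ε₁ ∧ |⟪x, V⟫| ≤ ε₂} = (fun x : E => (⟪x, U⟫, ⟪x, W⟫)) ⁻¹'
      {p : ℝ × ℝ | |p.1| ≤ ε₁ ∧ |u * p.1 + s * p.2| ≤ ε₂} := by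
    ext x
    simp only [Set.mem_preimage, Set.mem_ofPred, hinner]
  rw [hpre, hcoord.measure_preimage (measurableSet_parallelogram u s ε₁ ε₂).nullMeasurableSet,
    volume_parallelogram hs]

variable [FiniteDimensional ℝ E] [MeasurableSpace E] [BorelSpace E]

lemma lintegral_eq_lintegral_prod_orthogonal (K : Submodule ℝ E) (f : E → ENNReal) :
    ∫⁻ x, f x = ∫⁻ p : K × Kᗮ, f (p.1 + p.2) := by
  let e : (K × Kᗮ) ≃ᵐ E := (MeasurableEquiv.toLp 2 _).trans
    K.orthogonalDecomposition.symm.toHomeomorph.toMeasurableEquiv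
  have he : MeasurePreserving e :=
    K.orthogonalDecomposition.symm.measurePreserving.comp (WithLp.volume_preserving_toLp K Kᗮ)
  exact (he.lintegral_comp_emb e.measurableEmbedding f).symm

lemma lintegral_exp_neg_mul_sq_norm {b : ℝ} (hb : 0 < b) :
    ∫⁻ x : E, ENNReal.ofReal (exp (-b * ‖x‖ ^ 2)) =
      ENNReal.ofReal ((π / b) ^ (finrank ℝ E / 2 : ℝ)) := by
  have h := GaussianFourier.integral_rexp_neg_mul_sq_norm (V := E) hb
  rw [← h, ofReal_integral_eq_lintegral_ofReal]
  · exact .of_integral_ne_zero (by rw [h]; positivity)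
  · exact .of_forall fun x => (exp_pos _).le

theorem lintegral_inner_slabs_le {U V : E} (hU : ‖U‖ = 1) (hV : ‖V‖ = 1) (hUV : ⟪U, V⟫ ^ 2 < 1)
    (ε₁ ε₂ : ℝ) :
    ∫⁻ x in {x : E | |⟪x, U⟫| ≤ ε₁ ∧ |⟪x, V⟫| ≤ ε₂},
        ENNReal.ofReal (‖x‖ ^ 2 * exp (-‖x‖ ^ 2 / 2)) ≤
      4 * (ENNReal.ofReal (2 * ε₁) * ENNReal.ofReal (2 * ε₂ / √(1 - ⟪U, V⟫ ^ 2))) *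
        ENNReal.ofReal ((4 * π) ^ (finrank ℝ E / 2 : ℝ)) := by
  set K := Submodule.span ℝ (Set.range ![U, V])
  have hK : finrank ℝ K = 2 := by
    rw [finrank_span_eq_card (linearIndependent_pair_of_inner_sq_lt_one hU hV hUV),
      Fintype.card_fin]
  have hUK : U ∈ K := Submodule.subset_span ⟨0, rfl⟩
  have hVK : V ∈ K := Submodule.subset_span ⟨1, rfl⟩
  set S := {x : E | |⟪x, U⟫| ≤ ε₁ ∧ |⟪x, V⟫| ≤ ε₂}
  set P := {k : K | |⟪(k : E), U⟫| ≤ ε₁ ∧ |⟪(k : E), V⟫| ≤ ε₂}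
  have hS : MeasurableSet S := by measurability
  have hP : MeasurableSet P := by measurability
  have hvolP :
      volume P = ENNReal.ofReal (2 * ε₁) * ENNReal.ofReal (2 * ε₂ / √(1 - ⟪U, V⟫ ^ 2)) :=
    volume_inner_slabs_of_finrank_eq_two hK (U := ⟨U, hUK⟩) (V := ⟨V, hVK⟩) hU hV hUV ε₁ ε₂
  have hpt (k : K) (y : Kᗮ) :
      S.indicator (fun x => ENNReal.ofReal (‖x‖ ^ 2 * exp (-‖x‖ ^ 2 / 2))) ((k : E) + y) ≤
        P.indicator (fun _ => 4) k * ENNReal.ofReal (exp (-(1 / 4) * ‖y‖ ^ 2)) := by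
    by_cases hx : (k : E) + y ∈ S
    · have hUy : ⟪(y : E), U⟫ = 0 := Submodule.inner_left_of_mem_orthogonal hUK y.2
      have hVy : ⟪(y : E), V⟫ = 0 := Submodule.inner_left_of_mem_orthogonal hVK y.2
      have hkP : k ∈ P := by
        simp only [S, Set.mem_ofPred, inner_add_left, hUy, hVy, add_zero] at hx
        exact hx
      have hnorm : ‖(k : E) + y‖ ^ 2 = ‖(k : E)‖ ^ 2 + ‖(y : E)‖ ^ 2 := by
        rw [norm_add_sq_real, Submodule.inner_right_of_mem_orthogonal k.2 y.2, mul_zero, add_zero]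
      rw [Set.indicator_of_mem hx, Set.indicator_of_mem hkP, ← ENNReal.ofReal_ofNat 4,
        ← ENNReal.ofReal_mul (by norm_num)]
      refine ENNReal.ofReal_le_ofReal ((mul_exp_neg_half_le _).trans ?_)
      gcongr
      rw [hnorm, Submodule.coe_norm]
      linarith [sq_nonneg ‖(k : E)‖]
    · rw [Set.indicator_of_notMem hx]
      exact zero_le
  calc ∫⁻ x in S, ENNReal.ofReal (‖x‖ ^ 2 * exp (-‖x‖ ^ 2 / 2))
      = ∫⁻ p : K × Kᗮ, S.indicator (fun x => ENNReal.ofReal (‖x‖ ^ 2 * exp (-‖x‖ ^ 2 / 2)))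
          ((p.1 : E) + p.2) := by
        rw [← lintegral_indicator hS, lintegral_eq_lintegral_prod_orthogonal K]
    _ ≤ ∫⁻ p : K × Kᗮ, P.indicator (fun _ => 4) p.1 *
          ENNReal.ofReal (exp (-(1 / 4) * ‖(p.2 : Kᗮ)‖ ^ 2)) :=
        lintegral_mono fun p => hpt p.1 p.2
    _ = (∫⁻ k, P.indicator (fun _ => 4) k) *
          ∫⁻ y : Kᗮ, ENNReal.ofReal (exp (-(1 / 4) * ‖y‖ ^ 2)) :=
        lintegral_prod_mul (measurable_const.indicator hP).aemeasurable
          (g := fun y : Kᗮ => ENNReal.ofReal (exp (-(1 / 4) * ‖y‖ ^ 2))) (by fun_prop)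
    _ = 4 * volume P * ENNReal.ofReal ((4 * π) ^ (finrank ℝ Kᗮ / 2 : ℝ)) := by
        rw [lintegral_indicator_const hP, lintegral_exp_neg_mul_sq_norm (by norm_num),
          div_div_eq_mul_div, div_one, mul_comm π]
    _ ≤ _ := by
        rw [hvolP]
        gcongr
        · linarith [pi_gt_three]
        · exact_mod_cast Submodule.finrank_le Kᗮ

theorem setIntegral_inner_slabs_le {U V : E} (hU : ‖U‖ = 1) (hV : ‖V‖ = 1)
    (hUV : ⟪U, V⟫ ^ 2 < 1) {ε₁ ε₂ : ℝ} (hε₁ : 0 ≤ ε₁) (hε₂ : 0 ≤ ε₂) :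
    ∫ x in {x : E | |⟪x, U⟫| ≤ ε₁ ∧ |⟪x, V⟫| ≤ ε₂}, ‖x‖ ^ 2 * exp (-‖x‖ ^ 2 / 2) ≤
      16 * (4 * π) ^ (finrank ℝ E / 2 : ℝ) * ε₁ * ε₂ / √(1 - ⟪U, V⟫ ^ 2) := by
  rw [integral_eq_lintegral_of_nonneg_ae (.of_forall fun x => by positivity)
    (by fun_prop : Continuous fun x : E => ‖x‖ ^ 2 * exp (-‖x‖ ^ 2 / 2)).aestronglyMeasurable]
  refine ENNReal.toReal_le_of_le_ofReal (by positivity)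
    ((lintegral_inner_slabs_le hU hV hUV ε₁ ε₂).trans_eq ?_)
  rw [← ENNReal.ofReal_ofNat 4, ← ENNReal.ofReal_mul (by positivity),
    ← ENNReal.ofReal_mul (by positivity), ← ENNReal.ofReal_mul (by positivity)]
  congr 1
  ring

end

theorem stmt19_general (N : ℕ) :
    ∃ C : ℝ, 0 < C ∧
      ∀ (U V : EuclideanSpace ℝ (Fin N)), ‖U‖ = 1 → ‖V‖ = 1 →
      ∀ u : ℝ, u = inner ℝ U V → u^2 ≠ 1 →
      ∀ ε₁ ε₂ : ℝ, 0 < ε₁ → 0 < ε₂ →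
        (∫ f in {f : EuclideanSpace ℝ (Fin N) |
            |(inner ℝ f U : ℝ)| ≤ ε₁ ∧ |(inner ℝ f V : ℝ)| ≤ ε₂},
          ‖f‖^2 * Real.exp (-‖f‖^2 / 2))
          ≤ C * ε₁ * ε₂ / Real.sqrt (1 - u^2) := by
  refine ⟨16 * (4 * π) ^ (N / 2 : ℝ), by positivity, ?_⟩
  rintro U V hU hV u rfl hu ε₁ ε₂ hε₁ hε₂
  have hUV : ⟪U, V⟫ ^ 2 < 1 := by
    refine lt_of_le_of_ne (sq_le_one_iff_abs_le_one _ |>.2 ?_) hu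
    simpa [hU, hV] using abs_real_inner_le_norm U V
  simpa [finrank_euclideanSpace_fin] using setIntegral_inner_slabs_le hU hV hUV hε₁.le hε₂.le

/-- For unit vectors `U, V ∈ ℝ^N` with `⟨U,V⟩ = u`, `u² ≠ 1`, the weighted Gaussian
mass of the slab intersection satisfies
`∫_{|⟨f,U⟩|≤ε₁, |⟨f,V⟩|≤ε₂} |f|² e^{-|f|²/2} df ≤ C_N ε₁ε₂/√(1-u²)`,
with `C_N` depending only on `N`. -/
theorem stmt19 (N : ℕ) (hN : 1 ≤ N) :
    ∃ C : ℝ, 0 < C ∧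
      ∀ (U V : EuclideanSpace ℝ (Fin N)), ‖U‖ = 1 → ‖V‖ = 1 →
      ∀ u : ℝ, u = inner ℝ U V → u^2 ≠ 1 →
      ∀ ε₁ ε₂ : ℝ, 0 < ε₁ → 0 < ε₂ →
        (∫ f in {f : EuclideanSpace ℝ (Fin N) |
            |(inner ℝ f U : ℝ)| ≤ ε₁ ∧ |(inner ℝ f V : ℝ)| ≤ ε₂},
          ‖f‖^2 * Real.exp (-‖f‖^2 / 2))
          ≤ C * ε₁ * ε₂ / Real.sqrt (1 - u^2) :=
  stmt19_general N
end
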